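/- arXiv:2208.03447 — 10 statements merged into one kernel-verified Lean document; each statement's English description precedes it below -/
import Mathlib

section
/- Let A, B, C be multidimensional matrices of the same order n over the reals, of dimensions d, t, s respectively (each at least 1). Then the product of multidimensional matrices is associative: (A ∘ B) ∘ C = A ∘ (B ∘ C). -/
/-- A multidimensional matrix of order `n` and dimension `1 + |ι|` over the reals,
presented with a distinguished first index together with remaining indices
labelled by the (finite) type `ι`.  Since every dimension has the form
`1 + |ι|`, the dimensions are automatically at least `1`. -/
def MDMatrix (n : ℕ) (ι : Type) := Fin n → (ι → Fin n) → ℝ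

/-- The product `A ∘ B` of a `(1 + |ι|)`-dimensional matrix of order `n` with a
`(1 + |κ|)`-dimensional matrix of order `n`: it is the `(1 + |ι × κ|)`-dimensional
matrix with entries
`c_{i,β} = ∑_{g : ι → [n]} a_{i,g} ∏_{j : ι} b_{g j, β(j,·)}`. -/
def mdMul {n : ℕ} {ι κ : Type} [Fintype ι] [DecidableEq ι]
    (A : MDMatrix n ι) (B : MDMatrix n κ) : MDMatrix n (ι × κ) :=
  fun i β => ∑ g : ι → Fin n, A i g * ∏ j : ι, B (g j) (fun l => β (j, l))

/-- The product of multidimensional matrices is associative: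
`(A ∘ B) ∘ C = A ∘ (B ∘ C)` (up to the canonical identification of the index
types `(ι × κ) × μ` and `ι × (κ × μ)`). -/
theorem mdMul_assoc {n : ℕ} {ι κ μ : Type}
    [Fintype ι] [DecidableEq ι] [Fintype κ] [DecidableEq κ]
    (A : MDMatrix n ι) (B : MDMatrix n κ) (C : MDMatrix n μ)
    (i : Fin n) (β : (ι × κ) × μ → Fin n) :
    mdMul (mdMul A B) C i β
      = mdMul A (mdMul B C) i (fun p => β ((Equiv.prodAssoc ι κ μ).symm p)) := by
  simp only [mdMul, Equiv.prodAssoc, Equiv.coe_fn_symm_mk, Finset.sum_mul,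
    Finset.mul_sum, Finset.prod_univ_sum, Finset.prod_mul_distrib]
  rw [Finset.sum_comm]
  refine Finset.sum_congr rfl fun f _ => ?_
  rw [show (Finset.univ : Finset (ι × κ → Fin n)) =
      Fintype.piFinset (fun _ : ι × κ => (Finset.univ : Finset (Fin n))) by simp]
  refine Finset.sum_nbij' (fun g => fun j k => g (j, k)) (fun H => fun p => H p.1 p.2)
    ?_ ?_ ?_ ?_ ?_ <;> intros <;>
    simp [Fintype.prod_prod_type, mul_assoc]
end

section
/- Let G be a hypergraph with incidence matrix B, let P be a perfect coloring of G in k colors with incidence parameters (V,W), let R be the induced coloring of hyperedges into l colors (by color range), and let N = PᵀP and M = RᵀR be the diagonal matrices whose diagonal entries n_i and m_j count the vertices of color i and the hyperedges of color j. Then N V = Wᵀ M, and B decomposes (after permuting rows and columns according to the color classes) into blocks A_{i,j} of sizes n_i × m_j, where A_{i,j} is a (0,1)-matrix in which every row sum equals v_{i,j} and every column sum equals w_{j,i}. -/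
open Finset

/-- The multiset of color ranges of the hyperedges incident to the vertex `x`,
for a hypergraph with hyperedges `E : Fin m → Finset (Fin n)` and a vertex
coloring `f`. -/
def incRangesIdx {n m k : ℕ} (E : Fin m → Finset (Fin n)) (f : Fin n → Fin k)
    (x : Fin n) : Multiset (Multiset (Fin k)) :=
  (Finset.univ.filter fun e => x ∈ E e).val.map fun e => (E e).val.map f

/-- A coloring is perfect if any two vertices of the same color have the same
multiset of color ranges of their incident hyperedges. -/
def IsPerfectIdx {n m k : ℕ} (E : Fin m → Finset (Fin n)) (f : Fin n → Fin k) : Prop :=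
  ∀ x y, f x = f y → incRangesIdx E f x = incRangesIdx E f y

/-- Theorem (VWblock, part 1).  Let `G` be a hypergraph with incidence matrix `B`,
`f` a perfect coloring of `G` in `k` colors with incidence parameters `(V, W)`,
`g` the induced coloring of hyperedges into `l` colors (by color range), and
`N = PᵀP`, `M = RᵀR` the diagonal matrices counting vertices of color `i` and
hyperedges of color `j`.  Then `N V = Wᵀ M` and `B` decomposes into blocks
indexed by a vertex color `i` and a hyperedge color `j` in which every row sum
equals `v_{i,j}` and every column sum equals `w_{j,i}`. -/
theorem stmt2 {n m k l : ℕ}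
    (E : Fin m → Finset (Fin n)) (hEne : ∀ e, (E e).Nonempty)
    (hEinj : Function.Injective E)
    (B : Matrix (Fin n) (Fin m) ℕ)
    (hB : ∀ x e, B x e = if x ∈ E e then 1 else 0)
    (f : Fin n → Fin k) (hf : Function.Surjective f)
    (g : Fin m → Fin l) (hgsurj : Function.Surjective g)
    (hgrange : ∀ e e', g e = g e' ↔ (E e).val.map f = (E e').val.map f)
    (hperf : IsPerfectIdx E f)
    (V : Matrix (Fin k) (Fin l) ℕ) (W : Matrix (Fin l) (Fin k) ℕ)
    (hV : ∀ (x : Fin n) (j : Fin l),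
      (Finset.univ.filter fun e => x ∈ E e ∧ g e = j).card = V (f x) j)
    (hW : ∀ (e : Fin m) (i : Fin k),
      ((E e).filter fun x => f x = i).card = W (g e) i)
    (N : Matrix (Fin k) (Fin k) ℕ) (M : Matrix (Fin l) (Fin l) ℕ)
    (hN : N = Matrix.diagonal fun i => (Finset.univ.filter fun x => f x = i).card)
    (hM : M = Matrix.diagonal fun j => (Finset.univ.filter fun e => g e = j).card) :
    N * V = W.transpose * M
      ∧ (∀ (x : Fin n) (j : Fin l),
          ∑ e ∈ Finset.univ.filter (fun e => g e = j), B x e = V (f x) j)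
      ∧ (∀ (e : Fin m) (i : Fin k),
          ∑ x ∈ Finset.univ.filter (fun x => f x = i), B x e = W (g e) i) := by

  have hrow : ∀ (x : Fin n) (j : Fin l),
      ∑ e ∈ Finset.univ.filter (fun e => g e = j), B x e = V (f x) j := by
    intro x j
    rw [← hV x j]
    simp only [hB]
    rw [Finset.sum_boole, ← Finset.filter_filter, Nat.cast_id]
    apply congrArg Finset.card
    ext e
    simp [and_comm]
  have hcol : ∀ (e : Fin m) (i : Fin k),
      ∑ x ∈ Finset.univ.filter (fun x => f x = i), B x e = W (g e) i := by
    intro e i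
    rw [← hW e i]
    simp only [hB]
    rw [Finset.sum_boole, Nat.cast_id]
    apply congrArg Finset.card
    ext x
    simp [and_comm]
  refine ⟨?_, hrow, hcol⟩
  subst hN hM
  ext i j
  rw [Matrix.diagonal_mul, Matrix.mul_diagonal, Matrix.transpose_apply]
  have key : ∑ x ∈ Finset.univ.filter (fun x => f x = i),
      ∑ e ∈ Finset.univ.filter (fun e => g e = j), B x e
      = ∑ e ∈ Finset.univ.filter (fun e => g e = j),
      ∑ x ∈ Finset.univ.filter (fun x => f x = i), B x e := Finset.sum_comm
  calc (Finset.univ.filter fun x => f x = i).card * V i j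
      = ∑ x ∈ Finset.univ.filter (fun x => f x = i), V (f x) j := by
        rw [Finset.sum_congr rfl (fun x hx => by
          rw [(Finset.mem_filter.mp hx).2]), Finset.sum_const, smul_eq_mul]
    _ = ∑ x ∈ Finset.univ.filter (fun x => f x = i),
          ∑ e ∈ Finset.univ.filter (fun e => g e = j), B x e := by
        exact Finset.sum_congr rfl fun x _ => (hrow x j).symm
    _ = ∑ e ∈ Finset.univ.filter (fun e => g e = j),
          ∑ x ∈ Finset.univ.filter (fun x => f x = i), B x e := key
    _ = ∑ e ∈ Finset.univ.filter (fun e => g e = j), W (g e) i :=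
        Finset.sum_congr rfl fun e _ => hcol e i
    _ = W j i * (Finset.univ.filter fun e => g e = j).card := by
        rw [Finset.sum_congr rfl (fun e he => by
          rw [(Finset.mem_filter.mp he).2]), Finset.sum_const, smul_eq_mul, mul_comm]
end

section
/- For every finite hypergraph G = (X,E) there is a perfect coloring f of G such that every perfect coloring of G is a refinement of f. Moreover, for every coloring g of G there exists a refinement h of g such that h is a perfect coloring and every perfect coloring of G that refines g is a refinement of h. -/
open Finset

/-- A coloring `f` is a refinement of a coloring `g` if every color class of `g`
is a union of color classes of `f`, and every class of hyperedges having equal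
color range under `g` is a union of classes of hyperedges having equal color
range under `f`. -/
def Refines {n m k k' : ℕ} (E : Fin m → Finset (Fin n))
    (f : Fin n → Fin k) (g : Fin n → Fin k') : Prop :=
  (∀ x y, f x = f y → g x = g y) ∧
  (∀ e e', (E e).val.map f = (E e').val.map f → (E e).val.map g = (E e').val.map g)


section Aux
variable {n m : ℕ}

def incR {α : Type*} (E : Fin m → Finset (Fin n)) (f : Fin n → α) (x : Fin n) :
    Multiset (Multiset α) :=
  (Finset.univ.filter fun e => x ∈ E e).val.map fun e => (E e).val.map f

lemma map_factor {α β : Type*} (x0 : Fin n) (f : Fin n → α) (g : Fin n → β)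
    (hfg : ∀ x y, f x = f y → g x = g y) : ∃ τ : α → β, ∀ x, τ (f x) = g x := by
  classical
  refine ⟨fun b => if h : ∃ z, f z = b then g h.choose else g x0, fun x => ?_⟩
  have hx : ∃ z, f z = f x := ⟨x, rfl⟩
  show (if h : ∃ z, f z = f x then g h.choose else g x0) = g x
  rw [dif_pos hx]
  exact hfg _ _ hx.choose_spec

lemma map_eq {α β : Type*} {f : Fin n → α} {g : Fin n → β} {τ : α → β}
    (hτ : ∀ x, τ (f x) = g x) (s : Multiset (Fin n)) : s.map g = (s.map f).map τ := by
  rw [Multiset.map_map]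
  exact Multiset.map_congr rfl fun x _ => (hτ x).symm

lemma incR_factor {α β : Type*} (E : Fin m → Finset (Fin n)) {f : Fin n → α} {g : Fin n → β}
    {τ : α → β} (hτ : ∀ x, τ (f x) = g x) (x : Fin n) :
    incR E g x = (incR E f x).map (Multiset.map τ) := by
  simp only [incR, Multiset.map_map]
  exact Multiset.map_congr rfl fun e _ => map_eq hτ _

lemma edge_factor (E : Fin m → Finset (Fin n)) (hE : ∀ e, (E e).Nonempty) {α β : Type*}
    {f : Fin n → α} {g : Fin n → β} (hfg : ∀ x y, f x = f y → g x = g y) :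
    ∀ e e' : Fin m, (E e).val.map f = (E e').val.map f →
      (E e).val.map g = (E e').val.map g := by
  intro e e' hee
  obtain ⟨x0, -⟩ := hE e
  obtain ⟨τ, hτ⟩ := map_factor x0 f g hfg
  rw [map_eq hτ, map_eq hτ, hee]

lemma incR_mono {α β : Type*} (E : Fin m → Finset (Fin n)) {f : Fin n → α} {g : Fin n → β}
    (hfg : ∀ x y, f x = f y → g x = g y) {x y : Fin n} (h2 : incR E f x = incR E f y) :
    incR E g x = incR E g y := by
  obtain ⟨τ, hτ⟩ := map_factor x f g hfg
  rw [incR_factor E hτ, incR_factor E hτ, h2]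

def canon {α : Type*} [DecidableEq α] (c : Fin n → α) (x : Fin n) : Fin n :=
  (Finset.univ.filter fun y => c y = c x).min' ⟨x, by simp⟩

lemma canon_spec {α : Type*} [DecidableEq α] (c : Fin n → α) (x : Fin n) :
    c (canon c x) = c x := by
  have := Finset.min'_mem (Finset.univ.filter fun y => c y = c x) ⟨x, by simp⟩
  simp only [Finset.mem_filter] at this
  exact this.2

lemma canon_ker {α : Type*} [DecidableEq α] (c : Fin n → α) (x y : Fin n) :
    canon c x = canon c y ↔ c x = c y := by
  constructor
  · intro h
    rw [← canon_spec c x, h]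
    exact canon_spec c y
  · intro h
    have hset : (Finset.univ.filter fun z => c z = c x) =
        (Finset.univ.filter fun z => c z = c y) := by simp [h]
    have hsub : (⟨Finset.univ.filter fun z => c z = c x, ⟨x, by simp⟩⟩ :
        {s : Finset (Fin n) // s.Nonempty}) =
        ⟨Finset.univ.filter fun z => c z = c y, ⟨y, by simp⟩⟩ := Subtype.ext hset
    exact congrArg (fun s : {s : Finset (Fin n) // s.Nonempty} => s.1.min' s.2) hsub

end Aux

section Main
variable {n m : ℕ}

def stepc (E : Fin m → Finset (Fin n)) (f : Fin n → Fin n) : Fin n → Fin n :=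
  canon fun x => (f x, incR E f x)

lemma stepc_ker (E : Fin m → Finset (Fin n)) (f : Fin n → Fin n) (x y : Fin n) :
    stepc E f x = stepc E f y ↔ f x = f y ∧ incR E f x = incR E f y := by
  unfold stepc
  rw [canon_ker, Prod.mk.injEq]

lemma factor_self (f g : Fin n → Fin n) (hfg : ∀ x y, f x = f y → g x = g y) :
    ∃ τ : Fin n → Fin n, ∀ x, τ (f x) = g x := by
  classical
  refine ⟨fun b => if h : ∃ z, f z = b then g h.choose else b, fun x => ?_⟩
  have hx : ∃ z, f z = f x := ⟨x, rfl⟩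
  show (if h : ∃ z, f z = f x then g h.choose else f x) = g x
  rw [dif_pos hx]
  exact hfg _ _ hx.choose_spec

lemma card_le (f g : Fin n → Fin n) (hfg : ∀ x y, f x = f y → g x = g y) :
    (univ.image g).card ≤ (univ.image f).card := by
  obtain ⟨τ, hτ⟩ := factor_self f g hfg
  have himg : univ.image g = (univ.image f).image τ := by
    rw [Finset.image_image]
    exact Finset.image_congr fun x _ => (hτ x).symm
  rw [himg]
  exact Finset.card_image_le

lemma ker_of_card_eq (f g : Fin n → Fin n) (hfg : ∀ x y, g x = g y → f x = f y)
    (hcard : (univ.image f).card = (univ.image g).card) :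
    ∀ x y, f x = f y → g x = g y := by
  obtain ⟨τ, hτ⟩ := factor_self g f hfg
  have himg : univ.image f = (univ.image g).image τ := by
    rw [Finset.image_image]
    exact Finset.image_congr fun x _ => (hτ x).symm
  have hinj : Set.InjOn τ (univ.image g) := by
    apply Finset.injOn_of_card_image_eq
    rw [← himg, hcard]
  intro x y hxy
  exact hinj (Finset.mem_image_of_mem g (mem_univ x)) (Finset.mem_image_of_mem g (mem_univ y))
    (by rw [hτ, hτ]; exact hxy)

lemma main_lemma (E : Fin m → Finset (Fin n)) (g0 : Fin n → Fin n) :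
    ∃ h0 : Fin n → Fin n,
      (∀ x y, h0 x = h0 y → g0 x = g0 y) ∧
      (∀ x y, h0 x = h0 y → incR E h0 x = incR E h0 y) ∧
      (∀ (k'' : ℕ) (f : Fin n → Fin k''),
        (∀ x y, f x = f y → incR E f x = incR E f y) →
        (∀ x y, f x = f y → g0 x = g0 y) →
        ∀ x y, f x = f y → h0 x = h0 y) := by
  set it : ℕ → (Fin n → Fin n) := fun i => (stepc E)^[i] g0 with hit
  have hA : ∀ i x y, it (i + 1) x = it (i + 1) y → it i x = it i y := by
    intro i x y h
    simp only [hit, Function.iterate_succ_apply'] at h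
    exact ((stepc_ker E (it i) x y).1 h).1
  have hB : ∀ i x y, it i x = it i y → g0 x = g0 y := by
    intro i
    induction i with
    | zero => intro x y h; exact h
    | succ j ih => intro x y h; exact ih x y (hA j x y h)
  set N : ℕ → ℕ := fun i => (univ.image (it i)).card with hN
  have hmono : ∀ i, N i ≤ N (i + 1) := fun i => card_le (it (i + 1)) (it i) (hA i)
  have hbound : ∀ i, N i ≤ n := by
    intro i
    calc (univ.image (it i)).card ≤ (univ : Finset (Fin n)).card := Finset.card_le_univ _
    _ = n := by simp
  have hex : ∃ i, N i = N (i + 1) := by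
    by_contra hcon
    push_neg at hcon
    have hstrict : ∀ j, j ≤ N j := by
      intro j
      induction j with
      | zero => exact Nat.zero_le _
      | succ l ih =>
        have := lt_of_le_of_ne (hmono l) (hcon l)
        omega
    have := hstrict (n + 1)
    have := hbound (n + 1)
    omega
  obtain ⟨i, hi⟩ := hex
  have hstab : ∀ x y, it i x = it i y → it (i + 1) x = it (i + 1) y :=
    ker_of_card_eq (it i) (it (i + 1)) (hA i) hi
  refine ⟨it i, hB i, ?_, ?_⟩
  · intro x y hxy
    have h2 := hstab x y hxy
    simp only [hit, Function.iterate_succ_apply'] at h2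
    exact ((stepc_ker E (it i) x y).1 h2).2
  · intro k'' f hperf hg
    have key : ∀ j x y, f x = f y → it j x = it j y := by
      intro j
      induction j with
      | zero => exact hg
      | succ l ih =>
        intro x y hf
        simp only [hit, Function.iterate_succ_apply']
        exact (stepc_ker E (it l) x y).2 ⟨ih x y hf, incR_mono E ih (hperf x y hf)⟩
    exact key i

lemma normalizeColoring (h0 : Fin n → Fin n) :
    ∃ (k : ℕ) (h : Fin n → Fin k), Function.Surjective h ∧
      ∀ x y, h x = h y ↔ h0 x = h0 y := by
  classical
  set s : Finset (Fin n) := univ.image h0 with hs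
  set e := s.orderIsoOfFin rfl with he
  refine ⟨s.card, fun x => e.symm ⟨h0 x, Finset.mem_image_of_mem _ (mem_univ x)⟩, ?_, ?_⟩
  · intro b
    have hb : ((e b : s) : Fin n) ∈ s := (e b).2
    obtain ⟨x, -, hx⟩ := Finset.mem_image.1 hb
    refine ⟨x, ?_⟩
    have hsub : (⟨h0 x, Finset.mem_image_of_mem _ (mem_univ x)⟩ : {a // a ∈ s}) = e b :=
      Subtype.ext hx
    show e.symm ⟨h0 x, Finset.mem_image_of_mem _ (mem_univ x)⟩ = b
    rw [hsub]
    exact e.symm_apply_apply b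
  · intro x y
    constructor
    · intro hxy
      have := congrArg e hxy
      simp only [OrderIso.apply_symm_apply] at this
      exact congrArg Subtype.val this
    · intro hxy
      show e.symm ⟨h0 x, _⟩ = e.symm ⟨h0 y, _⟩
      exact congrArg e.symm (Subtype.ext hxy)

end Main

/-- Weisfeiler–Leman for hypergraphs: every finite hypergraph has a coarsest perfect
coloring, and every coloring `g` has a canonical perfect refinement `h` such that every
perfect coloring refining `g` refines `h`. -/
theorem stmt4 {n m : ℕ} (E : Fin m → Finset (Fin n)) (hE : ∀ e, (E e).Nonempty) :
    (∃ (k : ℕ) (f : Fin n → Fin k), Function.Surjective f ∧ IsPerfectIdx E f ∧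
       ∀ (k' : ℕ) (f' : Fin n → Fin k'), Function.Surjective f' → IsPerfectIdx E f' →
         Refines E f' f) ∧
    (∀ (k : ℕ) (g : Fin n → Fin k), Function.Surjective g →
       ∃ (k' : ℕ) (h : Fin n → Fin k'), Function.Surjective h ∧ IsPerfectIdx E h ∧
         Refines E h g ∧
         ∀ (k'' : ℕ) (f : Fin n → Fin k''), Function.Surjective f → IsPerfectIdx E f →
           Refines E f g → Refines E f h) := by
  have part2 : ∀ (k : ℕ) (g : Fin n → Fin k), Function.Surjective g →
      ∃ (k' : ℕ) (h : Fin n → Fin k'), Function.Surjective h ∧ IsPerfectIdx E h ∧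
        Refines E h g ∧
        ∀ (k'' : ℕ) (f : Fin n → Fin k''), Function.Surjective f → IsPerfectIdx E f →
          Refines E f g → Refines E f h := by
    intro k g hgsurj
    classical
    obtain ⟨h0, hres, hperf0, hmax0⟩ := main_lemma E (canon g)
    obtain ⟨k', h, hsurj, hker⟩ := normalizeColoring h0
    have hhg : ∀ x y, h x = h y → g x = g y := by
      intro x y hxy
      exact (canon_ker g x y).1 (hres x y ((hker x y).1 hxy))
    have hfact : ∀ x y, h0 x = h0 y → h x = h y := fun x y hxy => (hker x y).2 hxy
    refine ⟨k', h, hsurj, ?_, ⟨hhg, edge_factor E hE hhg⟩, ?_⟩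
    · intro x y hxy
      exact incR_mono E hfact (hperf0 x y ((hker x y).1 hxy))
    · intro k'' f hfsurj hfperf hfref
      have h1 : ∀ x y, f x = f y → canon g x = canon g y := fun x y hxy =>
        (canon_ker g x y).2 (hfref.1 x y hxy)
      have h2 : ∀ x y, f x = f y → h x = h y := fun x y hxy =>
        (hker x y).2 (hmax0 k'' f hfperf h1 x y hxy)
      exact ⟨h2, edge_factor E hE h2⟩
  refine ⟨?_, part2⟩
  classical
  obtain ⟨k, g, gsurj, gker⟩ := normalizeColoring (canon (fun _ : Fin n => (0 : Fin 1)))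
  obtain ⟨k', h, hsurj, hperf, -, hmax⟩ := part2 k g gsurj
  have gtriv : ∀ x y : Fin n, g x = g y := fun x y =>
    (gker x y).2 ((canon_ker _ x y).2 rfl)
  exact ⟨k', h, hsurj, hperf, fun k'' f' hs hp => hmax k'' f' hs hp
    ⟨fun x y _ => gtriv x y, edge_factor E hE (fun x y _ => gtriv x y)⟩⟩
end

section
/- Let G be a d-uniform hypergraph on n vertices with d-dimensional adjacency matrix A, and let P be the color matrix of a coloring of G into k colors. The coloring is perfect if and only if there is a d-dimensional matrix S of order k with A ∘ P = P ∘ S. Moreover, in that case the entries of S are s_γ = v_{γ₁,γ} · ( (d−1)! / (d₁!⋯d_k!) )^{-1} for γ = (γ₁,…,γ_d), where v_{γ₁,γ} is the number of hyperedges of color range γ incident to each vertex of color γ₁ and d_l is the number of occurrences of color l in the multiset {γ₂,…,γ_d}. -/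
open Finset

/-- The product `A ∘ P` of a `(t+1)`-dimensional matrix `A` of order `n`
(presented with a distinguished first index and `t` further indices) with a
`2`-dimensional matrix `P`:
`(A ∘ P)_{i,β} = ∑_{g : [t] → [n]} a_{i,g} ∏_j p_{g j, β j}`. -/
def mdMulMat {n k t : ℕ} (A : Fin n → (Fin t → Fin n) → ℝ)
    (P : Matrix (Fin n) (Fin k) ℝ) : Fin n → (Fin t → Fin k) → ℝ :=
  fun i β => ∑ g : Fin t → Fin n, A i g * ∏ j, P (g j) (β j)

/-- The product `P ∘ S` of a `2`-dimensional matrix `P` with a `(t+1)`-dimensional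
matrix `S`: `(P ∘ S)_{i,β} = ∑_c p_{i,c} s_{c,β}`. -/
def matMulMd {n k t : ℕ} (P : Matrix (Fin n) (Fin k) ℝ)
    (S : Fin k → (Fin t → Fin k) → ℝ) : Fin n → (Fin t → Fin k) → ℝ :=
  fun i β => ∑ c : Fin k, P i c * S c β

/-- The product `A ∘ x` of a `(t+1)`-dimensional matrix with a vector:
`(A ∘ x)_i = ∑_{i₂,…,i_d} a_{i,i₂,…,i_d} x_{i₂} ⋯ x_{i_d}`. -/
def mdMulVec {n t : ℕ} (A : Fin n → (Fin t → Fin n) → ℝ) (x : Fin n → ℝ) :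
    Fin n → ℝ :=
  fun i => ∑ g : Fin t → Fin n, A i g * ∏ j, x (g j)

/-- The color matrix of a coloring `f`. -/
def colorMatrix {n k : ℕ} (f : Fin n → Fin k) : Matrix (Fin n) (Fin k) ℝ :=
  Matrix.of fun x i => if f x = i then 1 else 0

/-- The `(t+1)`-dimensional adjacency matrix of a `(t+1)`-uniform hypergraph on `n`
vertices: the entry at `α` is `1/t!` if the components of `α` are `t+1` distinct
vertices forming a hyperedge, and `0` otherwise. -/
noncomputable def adjMatrix (t : ℕ) {n : ℕ} (edges : Finset (Finset (Fin n))) :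
    Fin n → (Fin t → Fin n) → ℝ :=
  fun i g =>
    if Function.Injective (Fin.cons i g : Fin (t + 1) → Fin n)
        ∧ Finset.univ.image (Fin.cons i g) ∈ edges
    then ((t.factorial : ℝ))⁻¹ else 0

/-- The multiset of color ranges of the hyperedges incident to the vertex `x`. -/
def incidentRanges {n k : ℕ} (edges : Finset (Finset (Fin n))) (f : Fin n → Fin k)
    (x : Fin n) : Multiset (Multiset (Fin k)) :=
  (edges.filter fun e => x ∈ e).val.map fun e => e.val.map f

/-- A coloring is perfect if any two vertices of the same color have the same
multiset of color ranges of their incident hyperedges. -/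
def IsPerfect {n k : ℕ} (edges : Finset (Finset (Fin n))) (f : Fin n → Fin k) : Prop :=
  ∀ x y, f x = f y → incidentRanges edges f x = incidentRanges edges f y

lemma exists_fn_of_card {α : Type*} {t : ℕ} (m : Multiset α) (hm : Multiset.card m = t) :
    ∃ γ : Fin t → α, Multiset.map γ Finset.univ.val = m := by
  induction m using Quot.inductionOn with
  | h l =>
    have hm' : l.length = t := by simpa using hm
    subst hm'
    refine ⟨l.get, ?_⟩
    show Multiset.map l.get (List.finRange l.length : Multiset _) = _
    rw [Multiset.map_coe, List.map_get_finRange]; rfl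

lemma sum_count_univ {α : Type*} [Fintype α] [DecidableEq α] (m : Multiset α) :
    ∑ c : α, m.count c = Multiset.card m := by
  rw [← Multiset.toFinset_sum_count_eq]
  exact (Finset.sum_subset (Finset.subset_univ _) (fun c _ hc => by
    simpa [Multiset.count_eq_zero] using (by simpa using hc : c ∉ m))).symm

-- equivalence between color-respecting injections and families of embeddings
def colorEquiv {n k t : ℕ} (f : Fin n → Fin k) (s : Finset (Fin n)) (γ : Fin t → Fin k) :
    {g : Fin t → Fin n // Function.Injective g ∧ ∀ j, g j ∈ s ∧ f (g j) = γ j} ≃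
    ∀ c : Fin k, ({j : Fin t // γ j = c} ↪ {a : Fin n // a ∈ s ∧ f a = c}) where
  toFun g c := ⟨fun j => ⟨g.1 j.1, (g.2.2 j.1).1, by rw [(g.2.2 j.1).2, j.2]⟩,
    fun j j' h => Subtype.ext (g.2.1 (congrArg Subtype.val h))⟩
  invFun F := ⟨fun j => (F (γ j) ⟨j, rfl⟩).1, by
    have aux : ∀ (c : Fin k) (j : Fin t) (h : γ j = c),
        ((F c ⟨j, h⟩ : {a : Fin n // a ∈ s ∧ f a = c}) : Fin n)
          = (F (γ j) ⟨j, rfl⟩ : {a : Fin n // a ∈ s ∧ f a = γ j}) := by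
      intro c j h; subst h; rfl
    refine ⟨?_, fun j => ⟨(F (γ j) ⟨j, rfl⟩).2.1, (F (γ j) ⟨j, rfl⟩).2.2⟩⟩
    intro j j' h
    replace h : ((F (γ j) ⟨j, rfl⟩ : _) : Fin n) = ((F (γ j') ⟨j', rfl⟩ : _) : Fin n) := h
    have hc : γ j' = γ j := by
      rw [← (F (γ j) ⟨j, rfl⟩).2.2, ← (F (γ j') ⟨j', rfl⟩).2.2, h]
    have h2 : ((F (γ j) ⟨j', hc⟩ : {a : Fin n // a ∈ s ∧ f a = γ j}) : Fin n)
        = (F (γ j') ⟨j', rfl⟩ : _) := aux (γ j) j' hc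
    have : F (γ j) ⟨j, rfl⟩ = F (γ j) ⟨j', hc⟩ := Subtype.ext (by rw [h2]; exact h)
    simpa using congrArg Subtype.val ((F (γ j)).injective this)⟩
  left_inv g := rfl
  right_inv F := by
    funext c
    apply Function.Embedding.ext
    intro j
    apply Subtype.ext
    show ((F (γ j.1) ⟨j.1, rfl⟩ : _) : Fin n) = _
    obtain ⟨j, hj⟩ := j
    subst hj
    rfl

lemma count_colored {n k t : ℕ} (f : Fin n → Fin k) (s : Finset (Fin n)) (hs : s.card = t)
    (γ : Fin t → Fin k) :
    (Finset.univ.filter fun g : Fin t → Fin n =>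
        Function.Injective g ∧ ∀ j, g j ∈ s ∧ f (g j) = γ j).card
    = if s.val.map f = Multiset.map γ Finset.univ.val
      then ∏ l : Fin k, ((Multiset.map γ Finset.univ.val).count l).factorial else 0 := by
  classical
  set m : Fin k → ℕ := fun c => (s.val.map f).count c with hm
  set d : Fin k → ℕ := fun c => ((Multiset.map γ Finset.univ.val).count c) with hd
  have hcards : (Finset.univ.filter fun g : Fin t → Fin n =>
      Function.Injective g ∧ ∀ j, g j ∈ s ∧ f (g j) = γ j).card
      = ∏ c : Fin k, (m c).descFactorial (d c) := by
    rw [← Fintype.card_subtype]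
    rw [Fintype.card_congr (colorEquiv f s γ), Fintype.card_pi]
    congr 1
    funext c
    rw [Fintype.card_embedding_eq]
    congr 1
    · show _ = Multiset.count c (Multiset.map f s.val)
      rw [Fintype.card_subtype, Multiset.count_map]
      rw [← Finset.filter_val, Finset.card_val]
      congr 1
      ext a
      simp [and_comm, eq_comm]
    · show _ = Multiset.count c (Multiset.map γ Finset.univ.val)
      rw [Fintype.card_subtype, Multiset.count_map]
      rw [show (Finset.univ : Finset (Fin t)).val.filter (fun a => c = γ a)
            = (Finset.univ.filter fun a => γ a = c).val by
          rw [Finset.filter_val]; congr 1; funext a; simp [eq_comm]]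
      rfl
  rw [hcards]
  have hsum_m : ∑ c : Fin k, m c = t := by
    rw [hm]
    have := sum_count_univ (Multiset.map f s.val)
    simpa [hs] using this
  have hsum_d : ∑ c : Fin k, d c = t := by
    rw [hd]
    have := sum_count_univ (Multiset.map γ (Finset.univ.val : Multiset (Fin t)))
    simpa using this
  by_cases h : s.val.map f = Multiset.map γ Finset.univ.val
  · rw [if_pos h]
    apply Finset.prod_congr rfl
    intro c _
    have : m c = d c := by rw [hm, hd]; simp [h]
    rw [this, Nat.descFactorial_self]
  · rw [if_neg h]
    have hex : ∃ c : Fin k, m c < d c := by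
      by_contra hno
      push_neg at hno
      have hall : ∀ c ∈ (Finset.univ : Finset (Fin k)), d c = m c := by
        intro c _
        have := (Finset.sum_eq_sum_iff_of_le (fun i _ => hno i)).1
          (by rw [hsum_m, hsum_d])
        exact this c (Finset.mem_univ c)
      exact h (Multiset.ext.2 fun c => by
        have := hall c (Finset.mem_univ c); exact (by simpa [hm, hd] using this.symm))
    obtain ⟨c, hc⟩ := hex
    exact Finset.prod_eq_zero (Finset.mem_univ c)
      (Nat.descFactorial_eq_zero_iff_lt.2 hc)

lemma cons_image {n t : ℕ} (x : Fin n) (g : Fin t → Fin n) :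
    Finset.univ.image (Fin.cons x g : Fin (t+1) → Fin n) = insert x (Finset.univ.image g) := by
  ext a
  simp only [Finset.mem_image, Finset.mem_insert, Finset.mem_univ, true_and]
  constructor
  · rintro ⟨i, rfl⟩
    induction i using Fin.cases with
    | zero => exact Or.inl (by simp)
    | succ j => exact Or.inr ⟨j, by simp⟩
  · rintro (rfl | ⟨j, rfl⟩)
    exacts [⟨0, rfl⟩, ⟨j.succ, by simp⟩]

lemma cons_pred_iff {n t : ℕ} (x : Fin n) (e : Finset (Fin n)) (hx : x ∈ e)
    (he : e.card = t + 1) (g : Fin t → Fin n) :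
    (Function.Injective (Fin.cons x g : Fin (t+1) → Fin n)
      ∧ Finset.univ.image (Fin.cons x g) = e)
    ↔ (Function.Injective g ∧ ∀ j, g j ∈ e.erase x) := by
  constructor
  · rintro ⟨hinj, himg⟩
    obtain ⟨hx_nr, hginj⟩ := Fin.cons_injective_iff.1 hinj
    refine ⟨hginj, fun j => Finset.mem_erase.2 ⟨fun hgex => hx_nr ⟨j, hgex⟩, ?_⟩⟩
    · rw [← himg]
      exact Finset.mem_image.2 ⟨j.succ, Finset.mem_univ _, by simp⟩
  · rintro ⟨hginj, hmem⟩
    have hnr : x ∉ Set.range g := by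
      rintro ⟨j, rfl⟩
      exact (Finset.mem_erase.1 (hmem j)).1 rfl
    have himgsub : Finset.univ.image g ⊆ e.erase x := fun a ha => by
      obtain ⟨j, _, rfl⟩ := Finset.mem_image.1 ha
      exact hmem j
    have himg : Finset.univ.image g = e.erase x := by
      apply Finset.eq_of_subset_of_card_le himgsub
      rw [Finset.card_erase_of_mem hx, he, Finset.card_image_of_injective _ hginj]
      simp
    refine ⟨Fin.cons_injective_iff.2 ⟨hnr, hginj⟩, ?_⟩
    rw [cons_image, himg, Finset.insert_erase hx]

lemma entry_formula {n k t : ℕ} (edges : Finset (Finset (Fin n)))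
    (huni : ∀ e ∈ edges, e.card = t + 1) (f : Fin n → Fin k) (x : Fin n) (γ : Fin t → Fin k) :
    mdMulMat (adjMatrix t edges) (colorMatrix f) x γ
      = ((edges.filter fun e => x ∈ e ∧ e.val.map f
            = f x ::ₘ Multiset.map γ Finset.univ.val).card : ℝ)
        * ((∏ l : Fin k, ((Multiset.map γ Finset.univ.val).count l).factorial : ℕ) : ℝ)
        / (t.factorial : ℝ) := by
  classical
  set D : ℕ := ∏ l : Fin k, ((Multiset.map γ Finset.univ.val).count l).factorial with hD
  unfold mdMulMat adjMatrix colorMatrix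
  have step1 : ∀ g : Fin t → Fin n,
      (if Function.Injective (Fin.cons x g : Fin (t+1) → Fin n)
          ∧ Finset.univ.image (Fin.cons x g) ∈ edges
        then ((t.factorial : ℝ))⁻¹ else 0)
        * ∏ j, Matrix.of (fun x i => if f x = i then (1:ℝ) else 0) (g j) (γ j)
      = (t.factorial : ℝ)⁻¹ * (if (Function.Injective (Fin.cons x g : Fin (t+1) → Fin n)
          ∧ Finset.univ.image (Fin.cons x g) ∈ edges) ∧ ∀ j, f (g j) = γ j
          then 1 else 0) := by
    intro g
    rw [show (∏ j, Matrix.of (fun x i => if f x = i then (1:ℝ) else 0) (g j) (γ j))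
        = ∏ j, (if f (g j) = γ j then (1:ℝ) else 0) from rfl, Finset.prod_boole]
    split_ifs with h1 h2 h3 h3 <;> simp_all
  rw [Finset.sum_congr rfl (fun g _ => step1 g), ← Finset.mul_sum, Finset.sum_boole]
  have step2 : (Finset.univ.filter fun g : Fin t → Fin n =>
      (Function.Injective (Fin.cons x g : Fin (t+1) → Fin n)
        ∧ Finset.univ.image (Fin.cons x g) ∈ edges) ∧ ∀ j, f (g j) = γ j).card
      = D * (edges.filter fun e => x ∈ e ∧ e.val.map f
            = f x ::ₘ Multiset.map γ Finset.univ.val).card := by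
    rw [Finset.card_eq_sum_card_fiberwise
      (f := fun g : Fin t → Fin n => Finset.univ.image (Fin.cons x g))
      (t := edges) (fun g hg => (Finset.mem_filter.1 hg).2.1.2)]
    have key : ∀ e ∈ edges,
        ((Finset.univ.filter fun g : Fin t → Fin n =>
          (Function.Injective (Fin.cons x g : Fin (t+1) → Fin n)
            ∧ Finset.univ.image (Fin.cons x g) ∈ edges) ∧ ∀ j, f (g j) = γ j).filter
            fun g => Finset.univ.image (Fin.cons x g) = e).card
        = if x ∈ e ∧ e.val.map f = f x ::ₘ Multiset.map γ Finset.univ.val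
          then D else 0 := by
      intro e he
      by_cases hx : x ∈ e
      · rw [Finset.filter_filter]
        have hpred : ∀ g : Fin t → Fin n,
            (((Function.Injective (Fin.cons x g : Fin (t+1) → Fin n)
              ∧ Finset.univ.image (Fin.cons x g) ∈ edges) ∧ ∀ j, f (g j) = γ j)
              ∧ Finset.univ.image (Fin.cons x g) = e)
            ↔ (Function.Injective g ∧ ∀ j, g j ∈ e.erase x ∧ f (g j) = γ j) := by
          intro g
          constructor
          · rintro ⟨⟨⟨hinj, _⟩, hcol⟩, himg⟩
            obtain ⟨hginj, hmem⟩ := (cons_pred_iff x e hx (huni e he) g).1 ⟨hinj, himg⟩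
            exact ⟨hginj, fun j => ⟨hmem j, hcol j⟩⟩
          · rintro ⟨hginj, hall⟩
            obtain ⟨hinj, himg⟩ := (cons_pred_iff x e hx (huni e he) g).2
              ⟨hginj, fun j => (hall j).1⟩
            exact ⟨⟨⟨hinj, himg ▸ he⟩, fun j => (hall j).2⟩, himg⟩
        rw [Finset.filter_congr (fun g _ => hpred g)]
        have hcard : (e.erase x).card = t := by
          rw [Finset.card_erase_of_mem hx, huni e he]
          omega
        rw [count_colored f (e.erase x) hcard γ]
        have hcond : ((e.erase x).val.map f = Multiset.map γ Finset.univ.val)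
            ↔ (e.val.map f = f x ::ₘ Multiset.map γ Finset.univ.val) := by
          have hval : e.val = x ::ₘ (e.erase x).val := by
            rw [Finset.erase_val, Multiset.cons_erase (Finset.mem_def.1 hx)]
          rw [hval, Multiset.map_cons, Multiset.cons_inj_right]
        by_cases hc : e.val.map f = f x ::ₘ Multiset.map γ Finset.univ.val
        · rw [if_pos (hcond.2 hc), if_pos ⟨hx, hc⟩]
        · rw [if_neg (fun hh => hc (hcond.1 hh)), if_neg (fun hh => hc hh.2)]
      · rw [if_neg (fun hh => hx hh.1)]
        rw [Finset.card_eq_zero, Finset.filter_eq_empty_iff]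
        intro g hg hcontra
        apply hx
        rw [← hcontra]
        exact Finset.mem_image.2 ⟨0, Finset.mem_univ _, by simp⟩
    rw [Finset.sum_congr rfl key]
    rw [Finset.sum_ite, Finset.sum_const, Finset.sum_const_zero, add_zero, smul_eq_mul,
      mul_comm]
  rw [step2]
  push_cast
  ring

lemma matMulMd_color {n k t : ℕ} (f : Fin n → Fin k) (S : Fin k → (Fin t → Fin k) → ℝ)
    (x : Fin n) (γ : Fin t → Fin k) :
    matMulMd (colorMatrix f) S x γ = S (f x) γ := by
  unfold matMulMd colorMatrix
  rw [show (∑ c : Fin k, (Matrix.of fun x i => if f x = i then (1:ℝ) else 0) x c * S c γ)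
      = ∑ c : Fin k, (if f x = c then S c γ else 0) by
    apply Finset.sum_congr rfl; intro c _; split_ifs <;> simp_all]
  rw [Finset.sum_ite_eq (Finset.univ) (f x) (fun c => S c γ), if_pos (Finset.mem_univ _)]

lemma count_incidentRanges {n k : ℕ} (edges : Finset (Finset (Fin n))) (f : Fin n → Fin k)
    (x : Fin n) (μ : Multiset (Fin k)) :
    Multiset.count μ (incidentRanges edges f x)
      = (edges.filter fun e => x ∈ e ∧ e.val.map f = μ).card := by
  classical
  unfold incidentRanges
  rw [Multiset.count_map]
  rw [show Multiset.filter (fun e => μ = Multiset.map f e.val) (edges.filter fun e => x ∈ e).val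
      = ((edges.filter fun e => x ∈ e).filter fun e => μ = Multiset.map f e.val).val from
    (Finset.filter_val _ _).symm]
  rw [Finset.card_val, Finset.filter_filter]
  congr 1
  apply Finset.filter_congr
  intro e _
  tauto

/-- A coloring `P` of a `(t+1)`-uniform hypergraph `G` is perfect iff there is a
`(t+1)`-dimensional matrix `S` of order `k` with `A ∘ P = P ∘ S`; moreover, in that
case the entries of `S` are
`s_γ = v_{γ₁,γ} · (d₁! ⋯ d_k!) / (d-1)!`, where `v_{γ₁,γ}` is the number of
hyperedges of color range `γ` incident to each vertex of color `γ₁`, and `d_l` is the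
number of occurrences of the color `l` in the multiset `{γ₂,…,γ_d}`. -/
theorem stmt5 {n k t : ℕ}
    (edges : Finset (Finset (Fin n))) (huni : ∀ e ∈ edges, e.card = t + 1)
    (f : Fin n → Fin k) (hf : Function.Surjective f) :
    (IsPerfect edges f ↔ ∃ S : Fin k → (Fin t → Fin k) → ℝ,
        mdMulMat (adjMatrix t edges) (colorMatrix f) = matMulMd (colorMatrix f) S) ∧
    (∀ S : Fin k → (Fin t → Fin k) → ℝ,
      mdMulMat (adjMatrix t edges) (colorMatrix f) = matMulMd (colorMatrix f) S →
      ∀ (c : Fin k) (γ : Fin t → Fin k) (x : Fin n), f x = c →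
        S c γ
          = ((edges.filter fun e => x ∈ e ∧ e.val.map f
                = c ::ₘ Multiset.map γ Finset.univ.val).card : ℝ)
            * ((∏ l : Fin k, ((Multiset.map γ Finset.univ.val).count l).factorial : ℕ) : ℝ)
            / (t.factorial : ℝ)) := by
  classical
  set γm : (Fin t → Fin k) → Multiset (Fin k) :=
    fun γ => Multiset.map γ Finset.univ.val with hγm
  have hD_pos : ∀ γ : Fin t → Fin k,
      (0:ℝ) < ((∏ l : Fin k, ((γm γ).count l).factorial : ℕ) : ℝ) := by
    intro γ
    have : 0 < ∏ l : Fin k, ((γm γ).count l).factorial :=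
      Finset.prod_pos fun l _ => Nat.factorial_pos _
    exact_mod_cast this
  have ht_pos : (0:ℝ) < (t.factorial : ℝ) := by exact_mod_cast t.factorial_pos
  -- N equality from S
  have keyN : ∀ S : Fin k → (Fin t → Fin k) → ℝ,
      mdMulMat (adjMatrix t edges) (colorMatrix f) = matMulMd (colorMatrix f) S →
      ∀ (γ : Fin t → Fin k) (x : Fin n),
      S (f x) γ = ((edges.filter fun e => x ∈ e ∧ e.val.map f = f x ::ₘ γm γ).card : ℝ)
          * ((∏ l : Fin k, ((γm γ).count l).factorial : ℕ) : ℝ) / (t.factorial : ℝ) := by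
    intro S hS γ x
    have := congrFun (congrFun hS x) γ
    rw [entry_formula edges huni f x γ, matMulMd_color] at this
    exact this.symm
  constructor
  · constructor
    · -- perfect → exists S
      intro hperf
      refine ⟨fun c γ => ((edges.filter fun e => (hf c).choose ∈ e
          ∧ e.val.map f = c ::ₘ γm γ).card : ℝ)
          * ((∏ l : Fin k, ((γm γ).count l).factorial : ℕ) : ℝ) / (t.factorial : ℝ), ?_⟩
      funext x γ
      rw [entry_formula edges huni f x γ, matMulMd_color]
      have hchoose : f ((hf (f x)).choose) = f x := (hf (f x)).choose_spec
      have hranges := hperf x ((hf (f x)).choose) hchoose.symm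
      have : (edges.filter fun e => x ∈ e ∧ e.val.map f = f x ::ₘ γm γ).card
          = (edges.filter fun e => (hf (f x)).choose ∈ e
              ∧ e.val.map f = f x ::ₘ γm γ).card := by
        rw [← count_incidentRanges, ← count_incidentRanges, hranges]
      rw [this]
    · -- exists S → perfect
      rintro ⟨S, hS⟩ x y hxy
      have hcount : ∀ μ : Multiset (Fin k),
          Multiset.count μ (incidentRanges edges f x)
            = Multiset.count μ (incidentRanges edges f y) := by
        intro μ
        by_cases hrep : ∃ γ : Fin t → Fin k, μ = f x ::ₘ γm γ
        · obtain ⟨γ, rfl⟩ := hrep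
          rw [count_incidentRanges, count_incidentRanges]
          have h1 := keyN S hS γ x
          have h2 := keyN S hS γ y
          rw [hxy] at h1
          rw [h1, ← hxy] at h2
          rw [div_eq_div_iff (ne_of_gt ht_pos) (ne_of_gt ht_pos)] at h2
          have h3 := mul_right_cancel₀ (ne_of_gt ht_pos) h2
          have h4 := mul_right_cancel₀ (ne_of_gt (hD_pos γ)) h3
          exact_mod_cast h4
        · -- μ not representable: both counts zero
          have haux : ∀ z : Fin n, f z = f x →
              Multiset.count μ (incidentRanges edges f z) = 0 := by
            intro z hz
            rw [count_incidentRanges, Finset.card_eq_zero, Finset.filter_eq_empty_iff]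
            rintro e he ⟨hze, hμ⟩
            apply hrep
            have hfz : f z ∈ μ := by
              rw [← hμ]
              exact Multiset.mem_map_of_mem f (Finset.mem_def.1 hze)
            have hcard : Multiset.card (μ.erase (f z)) = t := by
              rw [Multiset.card_erase_of_mem hfz, ← hμ, Multiset.card_map,
                Finset.card_val, huni e he]
              rfl
            obtain ⟨γ, hγ⟩ := exists_fn_of_card (μ.erase (f z)) hcard
            refine ⟨γ, ?_⟩
            show μ = f x ::ₘ Multiset.map γ Finset.univ.val
            rw [hγ, ← hz]
            exact (Multiset.cons_erase hfz).symm
          rw [haux x rfl, haux y hxy.symm]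
      exact Multiset.ext.2 hcount
  · intro S hS c γ x hx
    have := keyN S hS γ x
    rw [hx] at this
    exact this
end

section
/- Let G be a d-uniform hypergraph, P a perfect coloring of G in k colors with EX-parameter matrix W = (w_{γ,l}) and d-dimensional parameter matrix S, let n_l be the number of vertices of color l, and let m_γ be the number of hyperedges of color range γ. Then for every index γ = (γ₁,…,γ_d), the entry s_γ of S equals d · (m_γ / n_{γ₁}) · ( d! / (w_{γ,1}!⋯w_{γ,k}!) )^{-1}, where here γ is identified with the color range given by the multiset of its components. -/
open Finset

/-!
The identity `A ∘ P = P ∘ S`, read at a vertex `x` of color `c` and an index `γ`, says that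
`t! · s_{c,γ}` is the number of `g` for which `Fin.cons x g` enumerates a hyperedge injectively
with color pattern `Fin.cons c γ`. Summing over the `n_c` vertices of color `c` counts all such
enumerations. For one hyperedge of color range `c ::ₘ γ` they are the color-preserving bijections
from positions to its vertices, a torsor under the permutations of positions fixing the pattern,
so there are `∏ l, w_{γ,l}!` of them.
-/

section Enumerations

variable {ι α κ : Type*} [Fintype ι] [DecidableEq κ]

theorem Multiset.count_map_univ_val (g : ι → κ) (l : κ) :
    (univ.val.map g).count l = Fintype.card {i // g i = l} := by
  rw [Multiset.count_map, Fintype.card_subtype, card_def, filter_val]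
  exact congrArg Multiset.card (Multiset.filter_congr fun _ _ => eq_comm)

variable [DecidableEq ι] [Fintype κ]

open Nat in
theorem card_colorPreserving_equiv [Fintype α] [DecidableEq α] {f : α → κ} {β : ι → κ}
    (hcol : univ.val.map β = univ.val.map f) :
    Fintype.card {σ : ι ≃ α // ∀ i, f (σ i) = β i} = ∏ l, ((univ.val.map β).count l)! := by
  have hfib (l : κ) : Fintype.card {i // β i = l} = Fintype.card {a // f a = l} := by
    rw [← Multiset.count_map_univ_val, ← Multiset.count_map_univ_val, hcol]
  let σ₀ : ι ≃ α := Equiv.ofFiberEquiv fun l => Fintype.equivOfCardEq (hfib l)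
  have hσ₀ (a : α) : β (σ₀.symm a) = f a := by
    conv_rhs => rw [← σ₀.apply_symm_apply a]
    exact (Equiv.ofFiberEquiv_map _ _).symm
  have htorsor : {σ : ι ≃ α // ∀ i, f (σ i) = β i} ≃ {p : Equiv.Perm ι // β ∘ p = β} :=
    { toFun := fun σ => ⟨σ.1.trans σ₀.symm, funext fun i => by simp [hσ₀, σ.2]⟩
      invFun := fun p => ⟨p.1.trans σ₀, fun i => by
        simp only [Equiv.trans_apply, ← hσ₀, Equiv.symm_apply_apply]
        exact congrFun p.2 i⟩
      left_inv := fun σ => by ext; simp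
      right_inv := fun p => by ext; simp }
  rw [Fintype.card_congr htorsor, DomMulAct.stabilizer_card]
  simp only [Multiset.count_map_univ_val]

variable [Fintype α] [DecidableEq α]

noncomputable def enumerationsOfEdgeEquiv (e : Finset α) (he : e.card = Fintype.card ι)
    (f : α → κ) (β : ι → κ) :
    {h : ι → α // Function.Injective h ∧ univ.image h = e ∧ f ∘ h = β}
      ≃ {σ : ι ≃ e // ∀ i, f (σ i) = β i} where
  toFun h :=
    ⟨Equiv.ofBijective
        (fun i => ⟨h.1 i, by simpa only [h.2.2.1] using mem_image_of_mem h.1 (mem_univ i)⟩)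
        ((Fintype.bijective_iff_injective_and_card _).2
          ⟨fun _ _ hij => h.2.1 (congrArg Subtype.val hij), by simp [he]⟩),
      fun i => congrFun h.2.2.2 i⟩
  invFun σ := ⟨fun i => σ.1 i, fun _ _ hij => σ.1.injective (Subtype.ext hij), by
      ext a
      simp only [mem_image, mem_univ, true_and]
      exact ⟨by rintro ⟨i, rfl⟩; exact (σ.1 i).2, fun ha => ⟨σ.1.symm ⟨a, ha⟩, by simp⟩⟩,
    funext σ.2⟩
  left_inv _ := rfl
  right_inv _ := Subtype.ext (Equiv.ext fun _ => rfl)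

def edgeEnumerations (edges : Finset (Finset α)) (f : α → κ) (β : ι → κ) : Finset (ι → α) :=
  {h | Function.Injective h ∧ univ.image h ∈ edges ∧ f ∘ h = β}

theorem card_enumerations_of_edge {e : Finset α} (he : e.card = Fintype.card ι) {f : α → κ}
    {β : ι → κ} (hcol : e.val.map f = univ.val.map β) :
    #{h : ι → α | Function.Injective h ∧ univ.image h = e ∧ f ∘ h = β}
      = ∏ l, ((univ.val.map β).count l).factorial := by
  rw [← Fintype.card_subtype, Fintype.card_congr (enumerationsOfEdgeEquiv e he f β)]
  refine card_colorPreserving_equiv (f := fun a : e => f a) ?_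
  rw [← hcol, univ_eq_attach, attach_val]
  exact (Multiset.attach_map_val' _ _).symm

theorem card_edgeEnumerations {edges : Finset (Finset α)}
    (huni : ∀ e ∈ edges, e.card = Fintype.card ι) (f : α → κ) (β : ι → κ) :
    #(edgeEnumerations edges f β)
      = #{e ∈ edges | e.val.map f = univ.val.map β}
          * ∏ l, ((univ.val.map β).count l).factorial := by
  have hrange : Set.MapsTo (fun h : ι → α => univ.image h) (edgeEnumerations edges f β)
      ({e ∈ edges | e.val.map f = univ.val.map β} : Finset (Finset α)) := by
    intro h hh
    simp only [edgeEnumerations, coe_filter, mem_univ, true_and, Set.mem_ofPred_eq] at hh ⊢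
    obtain ⟨hinj, hmem, hcol⟩ := hh
    rw [image_val_of_injOn hinj.injOn, Multiset.map_map, hcol]
    exact ⟨hmem, rfl⟩
  rw [card_eq_sum_card_fiberwise hrange, ← smul_eq_mul, ← sum_const]
  refine sum_congr rfl fun e he => ?_
  rw [mem_filter] at he
  rw [← card_enumerations_of_edge (huni e he.1) he.2, edgeEnumerations, filter_filter]
  congr 1
  ext h
  simp only [mem_filter, mem_univ, true_and]
  constructor
  · rintro ⟨⟨hinj, -, hcol⟩, rfl⟩
    exact ⟨hinj, rfl, hcol⟩
  · rintro ⟨hinj, rfl, hcol⟩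
    exact ⟨⟨hinj, he.1, hcol⟩, rfl⟩

end Enumerations

section ParameterMatrix

variable {n k t : ℕ}

theorem prod_colorMatrix_apply (f : Fin n → Fin k) (g : Fin t → Fin n) (β : Fin t → Fin k) :
    ∏ j, colorMatrix f (g j) (β j) = if f ∘ g = β then 1 else 0 := by
  simp only [colorMatrix, Matrix.of_apply, prod_boole, mem_univ, true_implies, funext_iff,
    Function.comp_apply]

theorem matMulMd_colorMatrix (f : Fin n → Fin k) (S : Fin k → (Fin t → Fin k) → ℝ)
    (x : Fin n) (β : Fin t → Fin k) : matMulMd (colorMatrix f) S x β = S (f x) β := by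
  simp [matMulMd, colorMatrix]

theorem mdMulMat_colorMatrix (A : Fin n → (Fin t → Fin n) → ℝ) (f : Fin n → Fin k)
    (x : Fin n) (β : Fin t → Fin k) :
    mdMulMat A (colorMatrix f) x β = ∑ g with f ∘ g = β, A x g := by
  simp only [mdMulMat, prod_colorMatrix_apply, mul_ite, mul_one, mul_zero, sum_ite,
    sum_const_zero, add_zero]

theorem sum_mdMulMat_adjMatrix_colorMatrix (edges : Finset (Finset (Fin n)))
    (f : Fin n → Fin k) (c : Fin k) (γ : Fin t → Fin k) :
    ∑ x with f x = c, mdMulMat (adjMatrix t edges) (colorMatrix f) x γ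
      = (t.factorial : ℝ)⁻¹ * #(edgeEnumerations edges f (Fin.cons c γ)) := by
  have hcons (x : Fin n) (g : Fin t → Fin n) :
      f ∘ Fin.cons x g = Fin.cons c γ ↔ f x = c ∧ f ∘ g = γ := by
    rw [Fin.comp_cons, Fin.cons_inj]
  rw [card_eq_sum_ones, Nat.cast_sum, Nat.cast_one, mul_sum, mul_one, sum_filter,
    edgeEnumerations, sum_filter, ← (Fin.consEquiv fun _ => Fin n).sum_comp,
    Fintype.sum_prod_type]
  refine sum_congr rfl fun x _ => ?_
  simp only [mdMulMat_colorMatrix, sum_filter, Fin.consEquiv, Equiv.coe_fn_mk, hcons]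
  by_cases hx : f x = c
  · simp only [hx, if_true, true_and]
    refine sum_congr rfl fun g _ => ?_
    unfold adjMatrix
    split_ifs <;> tauto
  · simp [hx]

end ParameterMatrix

theorem stmt6_general {n k t : ℕ}
    (edges : Finset (Finset (Fin n))) (huni : ∀ e ∈ edges, e.card = t + 1)
    (f : Fin n → Fin k) (hf : Function.Surjective f)
    (S : Fin k → (Fin t → Fin k) → ℝ)
    (hS : mdMulMat (adjMatrix t edges) (colorMatrix f) = matMulMd (colorMatrix f) S) :
    ∀ (c : Fin k) (γ : Fin t → Fin k),
      S c γ
        = ((t : ℝ) + 1)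
            * ((edges.filter fun e =>
                  e.val.map f = c ::ₘ Multiset.map γ Finset.univ.val).card : ℝ)
            / ((Finset.univ.filter fun x => f x = c).card : ℝ)
            * ((∏ l : Fin k,
                  ((c ::ₘ Multiset.map γ Finset.univ.val).count l).factorial : ℕ) : ℝ)
            / ((t + 1).factorial : ℝ) := by
  intro c γ
  obtain ⟨x₀, hx₀⟩ := hf c
  have hclass : (#{x | f x = c} : ℝ) ≠ 0 :=
    Nat.cast_ne_zero.2 (card_ne_zero_of_mem (mem_filter.2 ⟨mem_univ _, hx₀⟩))
  have hsum : #{x | f x = c} * S c γ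
      = (t.factorial : ℝ)⁻¹ * #(edgeEnumerations edges f (Fin.cons c γ)) := by
    rw [← sum_mdMulMat_adjMatrix_colorMatrix, hS, ← nsmul_eq_mul, ← sum_const]
    exact sum_congr rfl fun x hx => by rw [matMulMd_colorMatrix, (mem_filter.1 hx).2]
  have hpattern : univ.val.map (Fin.cons c γ) = c ::ₘ univ.val.map γ := by
    simp [Fin.univ_val_map, List.ofFn_succ]
  rw [card_edgeEnumerations (fun e he => (huni e he).trans (Fintype.card_fin _).symm),
    hpattern] at hsum
  rw [Nat.factorial_succ]
  push_cast at hsum ⊢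
  field_simp at hsum ⊢
  linear_combination hsum

/-- Corollary (parammultii2).  Let `P` be a perfect coloring of a `(t+1)`-uniform
hypergraph with parameter matrix `S`; let `n_l` be the number of vertices of color `l`
and `m_γ` the number of hyperedges of color range `γ`.  Then for every index
`γ = (γ₁,…,γ_d)` (identified with the multiset of its components),
`s_γ = d · (m_γ / n_{γ₁}) · (w_{γ,1}! ⋯ w_{γ,k}!) / d!`, where `w_{γ,l}` is the number
of occurrences of the color `l` in the color range `γ` (the entries of the
EX-parameter matrix `W`). -/
theorem stmt6 {n k t : ℕ}
    (edges : Finset (Finset (Fin n))) (huni : ∀ e ∈ edges, e.card = t + 1)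
    (f : Fin n → Fin k) (hf : Function.Surjective f)
    (hperf : IsPerfect edges f)
    (S : Fin k → (Fin t → Fin k) → ℝ)
    (hS : mdMulMat (adjMatrix t edges) (colorMatrix f) = matMulMd (colorMatrix f) S) :
    ∀ (c : Fin k) (γ : Fin t → Fin k),
      S c γ
        = ((t : ℝ) + 1)
            * ((edges.filter fun e =>
                  e.val.map f = c ::ₘ Multiset.map γ Finset.univ.val).card : ℝ)
            / ((Finset.univ.filter fun x => f x = c).card : ℝ)
            * ((∏ l : Fin k,
                  ((c ::ₘ Multiset.map γ Finset.univ.val).count l).factorial : ℕ) : ℝ)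
            / ((t + 1).factorial : ℝ) :=
  stmt6_general edges huni f hf S hS
end

section
/- Let G be a d-uniform hypergraph, P a perfect coloring of G with d-dimensional parameter matrix S, and N = PᵀP. Then the d-dimensional matrix H = N ∘ S is symmetric, i.e., h_β = h_{σ(β)} for every index β and every permutation σ of the d positions. -/
open Finset

noncomputable def W {n : ℕ} (t : ℕ) (edges : Finset (Finset (Fin n)))
    (h : Fin (t+1) → Fin n) : ℝ :=
  if Function.Injective h ∧ Finset.univ.image h ∈ edges
  then ((t.factorial : ℝ))⁻¹ else 0

lemma adj_eq_W {n t : ℕ} (edges : Finset (Finset (Fin n))) (h : Fin (t+1) → Fin n) :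
    adjMatrix t edges (h 0) (fun j => h j.succ) = W t edges h := by
  have hc : (Fin.cons (h 0) (fun j => h j.succ) : Fin (t+1) → Fin n) = h :=
    Fin.cons_self_tail h
  unfold adjMatrix W
  rw [hc]

lemma W_comp {n t : ℕ} (edges : Finset (Finset (Fin n)))
    (σ : Equiv.Perm (Fin (t+1))) (h : Fin (t+1) → Fin n) :
    W t edges (h ∘ σ) = W t edges h := by
  unfold W
  congr 1
  have h1 : Function.Injective (h ∘ σ) ↔ Function.Injective h := by
    constructor
    · intro hi
      have := hi.comp σ.symm.injective
      simpa [Function.comp] using this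
    · intro hi; exact hi.comp σ.injective
  have h2 : Finset.univ.image (h ∘ σ) = Finset.univ.image h := by
    ext a
    simp only [Finset.mem_image, Finset.mem_univ, true_and, Function.comp]
    constructor
    · rintro ⟨i, rfl⟩; exact ⟨σ i, rfl⟩
    · rintro ⟨i, rfl⟩; exact ⟨σ.symm i, by simp⟩
  simp [h1, h2]

lemma key {n k t : ℕ} (edges : Finset (Finset (Fin n)))
    (f : Fin n → Fin k) (S : Fin k → (Fin t → Fin k) → ℝ)
    (hS : mdMulMat (adjMatrix t edges) (colorMatrix f) = matMulMd (colorMatrix f) S)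
    (γ : Fin (t+1) → Fin k) :
    matMulMd ((colorMatrix f).transpose * colorMatrix f) S (γ 0) (fun j => γ j.succ)
      = ∑ h : Fin (t+1) → Fin n, W t edges h * ∏ j, colorMatrix f (h j) (γ j) := by
  have hS' : ∀ x δ, matMulMd (colorMatrix f) S x δ
      = mdMulMat (adjMatrix t edges) (colorMatrix f) x δ := by
    rw [← hS]; intro x δ; rfl
  calc matMulMd ((colorMatrix f).transpose * colorMatrix f) S (γ 0) (fun j => γ j.succ)
      = ∑ c, (∑ x, colorMatrix f x (γ 0) * colorMatrix f x c) * S c (fun j => γ j.succ) := by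
        simp [matMulMd, Matrix.mul_apply, Matrix.transpose_apply]
    _ = ∑ x, colorMatrix f x (γ 0) * matMulMd (colorMatrix f) S x (fun j => γ j.succ) := by
        simp only [matMulMd, Finset.sum_mul, Finset.mul_sum]
        rw [Finset.sum_comm]
        apply Finset.sum_congr rfl; intros x _
        apply Finset.sum_congr rfl; intros c _
        ring
    _ = ∑ x, colorMatrix f x (γ 0) * ∑ g : Fin t → Fin n,
          adjMatrix t edges x g * ∏ j, colorMatrix f (g j) (γ j.succ) := by
        simp only [hS']; rfl
    _ = ∑ x, ∑ g : Fin t → Fin n, adjMatrix t edges x g *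
          (colorMatrix f x (γ 0) * ∏ j, colorMatrix f (g j) (γ j.succ)) := by
        apply Finset.sum_congr rfl; intros x _
        rw [Finset.mul_sum]; apply Finset.sum_congr rfl; intros g _; ring
    _ = ∑ p : Fin n × (Fin t → Fin n), adjMatrix t edges p.1 p.2 *
          (colorMatrix f p.1 (γ 0) * ∏ j, colorMatrix f (p.2 j) (γ j.succ)) := by
        rw [Fintype.sum_prod_type]
    _ = ∑ h : Fin (t+1) → Fin n, W t edges h * ∏ j, colorMatrix f (h j) (γ j) := by
        apply Fintype.sum_equiv (Fin.consEquiv fun _ => Fin n)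
        rintro ⟨x, g⟩
        rw [show (Fin.consEquiv fun _ => Fin n) (x, g) = Fin.cons x g from rfl,
          ← adj_eq_W]
        simp [Fin.prod_univ_succ]

/-- Let `P` be a perfect coloring of a `(t+1)`-uniform hypergraph `G` with
`(t+1)`-dimensional parameter matrix `S`, and `N = PᵀP`.  Then the `(t+1)`-dimensional
matrix `H = N ∘ S` is symmetric: `h_β = h_{σ(β)}` for every index `β : Fin (t+1) → Fin k`
and every permutation `σ` of the `t+1` positions. -/
theorem stmt8 {n k t : ℕ}
    (edges : Finset (Finset (Fin n))) (huni : ∀ e ∈ edges, e.card = t + 1)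
    (f : Fin n → Fin k) (hf : Function.Surjective f)
    (hperf : IsPerfect edges f)
    (S : Fin k → (Fin t → Fin k) → ℝ)
    (hS : mdMulMat (adjMatrix t edges) (colorMatrix f) = matMulMd (colorMatrix f) S) :
    ∀ (σ : Equiv.Perm (Fin (t + 1))) (β : Fin (t + 1) → Fin k),
      matMulMd ((colorMatrix f).transpose * colorMatrix f) S
          ((β ∘ σ) 0) (fun j => (β ∘ σ) j.succ)
        = matMulMd ((colorMatrix f).transpose * colorMatrix f) S
            (β 0) (fun j => β j.succ) := by
  intro σ β
  rw [key edges f S hS (β ∘ σ), key edges f S hS β]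
  apply Fintype.sum_equiv (Equiv.arrowCongr σ (Equiv.refl (Fin n)))
  intro h
  have hw : W t edges ((Equiv.arrowCongr σ (Equiv.refl (Fin n))) h) = W t edges h := by
    rw [← W_comp edges σ]
    congr 1
    ext j; simp [Equiv.arrowCongr]
  rw [hw]
  congr 1
  exact Fintype.prod_equiv σ _ _ (fun j => by simp [Equiv.arrowCongr])
end

section
/- Let A be a d-dimensional matrix of order n, P a color matrix of sizes n × k, and B a d-dimensional matrix of order k such that A ∘ P = P ∘ B. If (λ, x) is an eigenpair of B, then (λ, Px) is an eigenpair of A. -/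
open Finset

/-- Let `A` be a `(t+1)`-dimensional matrix of order `n`, `P` an `n × k` color matrix,
and `B` a `(t+1)`-dimensional matrix of order `k` with `A ∘ P = P ∘ B`.  If `(λ, x)` is
an eigenpair of `B` (i.e. `(B ∘ x)_c = λ x_c^{d-1}` for all `c`, with `d - 1 = t`),
then `(λ, Px)` is an eigenpair of `A`. -/
theorem stmt10 {n k t : ℕ}
    (A : Fin n → (Fin t → Fin n) → ℝ) (P : Matrix (Fin n) (Fin k) ℝ)
    (hP : ∃ f : Fin n → Fin k, ∀ x i, P x i = if f x = i then 1 else 0)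
    (B : Fin k → (Fin t → Fin k) → ℝ)
    (hAB : mdMulMat A P = matMulMd P B)
    (lam : ℝ) (x : Fin k → ℝ)
    (hx : ∀ c, mdMulVec B x c = lam * x c ^ t) :
    ∀ i, mdMulVec A (P.mulVec x) i = lam * (P.mulVec x i) ^ t := by
  obtain ⟨f, hf⟩ := hP
  have hPx : ∀ i, P.mulVec x i = x (f i) := by
    intro i
    simp [Matrix.mulVec, dotProduct, hf, ite_mul]
  intro i
  have key : mdMulVec A (P.mulVec x) i
      = ∑ β : Fin t → Fin k, mdMulMat A P i β * ∏ j, x (β j) := by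
    unfold mdMulVec mdMulMat
    simp_rw [Finset.sum_mul, mul_assoc]
    rw [Finset.sum_comm]
    refine Finset.sum_congr rfl fun g _ => ?_
    rw [← Finset.mul_sum]
    congr 1
    have : ∀ β : Fin t → Fin k, (∏ j, P (g j) (β j)) * ∏ j, x (β j)
        = ∏ j, P (g j) (β j) * x (β j) := fun β => (Finset.prod_mul_distrib).symm
    simp_rw [this]
    have hps := Finset.prod_univ_sum (κ := fun _ : Fin t => Fin k)
      (t := fun _ => (Finset.univ : Finset (Fin k)))
      (f := fun j b => P (g j) b * x b)
    rw [Fintype.piFinset_univ] at hps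
    rw [← hps]
    rfl
  rw [key, hAB]
  unfold matMulMd
  simp_rw [Finset.sum_mul, mul_assoc]
  rw [Finset.sum_comm]
  have : ∀ c, ∑ β : Fin t → Fin k, P i c * (B c β * ∏ j, x (β j))
      = P i c * (lam * x c ^ t) := by
    intro c
    rw [← Finset.mul_sum, ← hx c]
    rfl
  simp_rw [this, hf, ite_mul, one_mul, zero_mul]
  rw [Finset.sum_ite_eq]
  simp [hPx]
end

section
/- Let G be a d-uniform hypergraph with d-dimensional adjacency matrix A and let P be a perfect coloring of G with d-dimensional parameter matrix S. If (λ, x) is an eigenpair of S, then (λ, Px) is an eigenpair of A. -/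
open Finset

/-- Let `G` be a `(t+1)`-uniform hypergraph with adjacency matrix `A` and `P` a perfect
coloring of `G` with `(t+1)`-dimensional parameter matrix `S`.  If `(λ, x)` is an
eigenpair of `S`, then `(λ, Px)` is an eigenpair of `A`. -/
theorem stmt11 {n k t : ℕ}
    (edges : Finset (Finset (Fin n))) (huni : ∀ e ∈ edges, e.card = t + 1)
    (f : Fin n → Fin k) (hf : Function.Surjective f)
    (hperf : IsPerfect edges f)
    (S : Fin k → (Fin t → Fin k) → ℝ)
    (hS : mdMulMat (adjMatrix t edges) (colorMatrix f) = matMulMd (colorMatrix f) S)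
    (lam : ℝ) (x : Fin k → ℝ)
    (hx : ∀ c, mdMulVec S x c = lam * x c ^ t) :
    ∀ i, mdMulVec (adjMatrix t edges) ((colorMatrix f).mulVec x) i
      = lam * ((colorMatrix f).mulVec x i) ^ t := by
  intro i
  have hPx : ∀ j, (colorMatrix f).mulVec x j = x (f j) := by
    intro j
    simp [Matrix.mulVec, dotProduct, colorMatrix]
  have key : mdMulVec (adjMatrix t edges) ((colorMatrix f).mulVec x) i
      = ∑ β : Fin t → Fin k,
          mdMulMat (adjMatrix t edges) (colorMatrix f) i β * ∏ j, x (β j) := by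
    simp only [mdMulVec, mdMulMat, Finset.sum_mul]
    rw [Finset.sum_comm]
    refine Finset.sum_congr rfl fun g _ => ?_
    simp only [mul_assoc]
    rw [← Finset.mul_sum]
    congr 1
    have : ∀ β : Fin t → Fin k,
        (∏ j, colorMatrix f (g j) (β j)) * ∏ j, x (β j)
          = ∏ j, colorMatrix f (g j) (β j) * x (β j) := by
      intro β; rw [← Finset.prod_mul_distrib]
    simp only [this]
    have h2 : ∀ j : Fin t, (colorMatrix f).mulVec x (g j)
        = ∑ c : Fin k, colorMatrix f (g j) c * x c := by
      intro j; simp [Matrix.mulVec, dotProduct]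
    simp only [h2]
    rw [Finset.prod_univ_sum]
    simp
  rw [key, hS]
  have : ∀ β : Fin t → Fin k,
      matMulMd (colorMatrix f) S i β = S (f i) β := by
    intro β
    simp [matMulMd, colorMatrix]
  simp only [this]
  have := hx (f i)
  simp only [mdMulVec] at this
  rw [this, hPx]
end

section
/- Let G and H be d-uniform hypergraphs. A map φ: X(G) → X(H) is a covering of H by G if and only if φ, viewed as a coloring of the vertices of G by the vertices of H, is a perfect coloring of G whose d-dimensional parameter matrix S equals the d-dimensional adjacency matrix A_H of H; moreover, the incidence parameters of this coloring are (C, Cᵀ), where C is the incidence matrix of H. -/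
open Finset

/-- A hypergraph `G` covers a hypergraph `H` via a surjective map `φ` if the image of
every hyperedge of `G` under `φ` is a hyperedge of `H` and, for each vertex `x` of `G`,
taking images under `φ` is a bijection between the hyperedges of `G` incident to `x`
and the hyperedges of `H` incident to `φ x`. -/
def IsCoveringSet {nG nH : ℕ} (edgesG : Finset (Finset (Fin nG)))
    (edgesH : Finset (Finset (Fin nH))) (φ : Fin nG → Fin nH) : Prop :=
  Function.Surjective φ ∧
  (∀ e ∈ edgesG, e.image φ ∈ edgesH) ∧
  (∀ x : Fin nG, Set.BijOn (fun e => Finset.image φ e)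
      {e | e ∈ edgesG ∧ x ∈ e} {u | u ∈ edgesH ∧ φ x ∈ u})


section Aux
variable {nG nH t : ℕ}

lemma consComp (φ : Fin nG → Fin nH) (x : Fin nG) (g : Fin t → Fin nG) :
    (Fin.cons (φ x) (φ ∘ g) : Fin (t+1) → Fin nH) = φ ∘ Fin.cons x g := by
  funext i; refine Fin.cases ?_ ?_ i <;> simp

lemma imageCons {n : ℕ} (x : Fin n) (g : Fin t → Fin n) :
    Finset.univ.image (Fin.cons x g : Fin (t+1) → Fin n)
      = insert x (Finset.univ.image g) := by
  ext a; simp [Fin.exists_fin_succ, eq_comm]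

lemma cardImageCons {n : ℕ} (x : Fin n) (g : Fin t → Fin n)
    (h : Function.Injective (Fin.cons x g : Fin (t+1) → Fin n)) :
    (Finset.univ.image (Fin.cons x g : Fin (t+1) → Fin n)).card = t + 1 := by
  rw [Finset.card_image_of_injective _ h]; simp

/-- Reduction of the matrix-entry equation to a counting statement. -/
lemma entry_iff (edgesG : Finset (Finset (Fin nG))) (edgesH : Finset (Finset (Fin nH)))
    (φ : Fin nG → Fin nH) (x : Fin nG) (β : Fin t → Fin nH) :
    mdMulMat (adjMatrix t edgesG) (colorMatrix φ) x β
        = matMulMd (colorMatrix φ) (adjMatrix t edgesH) x β ↔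
      ((Finset.univ.filter fun g : Fin t → Fin nG =>
          Function.Injective (Fin.cons x g : Fin (t+1) → Fin nG)
          ∧ Finset.univ.image (Fin.cons x g) ∈ edgesG
          ∧ ∀ j, φ (g j) = β j).card
        = if Function.Injective (Fin.cons (φ x) β : Fin (t+1) → Fin nH)
              ∧ Finset.univ.image (Fin.cons (φ x) β) ∈ edgesH
          then 1 else 0) := by
  classical
  have hL : mdMulMat (adjMatrix t edgesG) (colorMatrix φ) x β
      = ((t.factorial : ℝ))⁻¹ *
        ((Finset.univ.filter fun g : Fin t → Fin nG =>
          Function.Injective (Fin.cons x g : Fin (t+1) → Fin nG)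
          ∧ Finset.univ.image (Fin.cons x g) ∈ edgesG
          ∧ ∀ j, φ (g j) = β j).card : ℝ) := by
    have h1 : mdMulMat (adjMatrix t edgesG) (colorMatrix φ) x β
        = ∑ g : Fin t → Fin nG,
            if Function.Injective (Fin.cons x g : Fin (t+1) → Fin nG)
              ∧ Finset.univ.image (Fin.cons x g) ∈ edgesG
              ∧ ∀ j, φ (g j) = β j
            then ((t.factorial : ℝ))⁻¹ else 0 := by
      refine Finset.sum_congr rfl fun g _ => ?_
      simp only [adjMatrix, colorMatrix, Matrix.of_apply, Finset.prod_boole,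
        Finset.mem_univ, forall_true_left]
      rw [ite_zero_mul_ite_zero]
      simp [and_assoc]
    rw [h1, ← Finset.sum_filter, Finset.sum_const, nsmul_eq_mul, mul_comm]
  have hR : matMulMd (colorMatrix φ) (adjMatrix t edgesH) x β
      = if Function.Injective (Fin.cons (φ x) β : Fin (t+1) → Fin nH)
            ∧ Finset.univ.image (Fin.cons (φ x) β) ∈ edgesH
        then ((t.factorial : ℝ))⁻¹ else 0 := by
    have : matMulMd (colorMatrix φ) (adjMatrix t edgesH) x β
        = adjMatrix t edgesH (φ x) β := by
      simp [matMulMd, colorMatrix, ite_mul, Finset.sum_ite_eq]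
    rw [this]; rfl
  rw [hL, hR]
  have hfac : ((t.factorial : ℝ))⁻¹ ≠ 0 := by
    simp [Nat.factorial_ne_zero]
  have hite : (if Function.Injective (Fin.cons (φ x) β : Fin (t+1) → Fin nH)
            ∧ Finset.univ.image (Fin.cons (φ x) β) ∈ edgesH
        then ((t.factorial : ℝ))⁻¹ else 0)
      = ((t.factorial : ℝ))⁻¹ *
        (((if Function.Injective (Fin.cons (φ x) β : Fin (t+1) → Fin nH)
            ∧ Finset.univ.image (Fin.cons (φ x) β) ∈ edgesH
          then 1 else 0 : ℕ)) : ℝ) := by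
    split_ifs <;> simp
  rw [hite, mul_right_inj' hfac, Nat.cast_inj]

/-- An enumeration of a finset of card `t` starting at nothing. -/
lemma exists_enum {n : ℕ} (s : Finset (Fin n)) (hs : s.card = t) :
    ∃ g : Fin t → Fin n, Function.Injective g ∧ Finset.univ.image g = s := by
  classical
  let eq := s.equivFinOfCardEq hs
  refine ⟨fun j => (eq.symm j : Fin n), ?_, ?_⟩
  · intro a b hab
    exact eq.symm.injective (Subtype.ext hab)
  · ext a
    simp only [Finset.mem_image, Finset.mem_univ, true_and]
    constructor
    · rintro ⟨j, rfl⟩; exact (eq.symm j).2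
    · intro ha; exact ⟨eq ⟨a, ha⟩, by simp⟩

lemma injOn_image_of_comp {n m k : ℕ} {φ : Fin m → Fin k} {f : Fin n → Fin m}
    (h : Function.Injective (φ ∘ f)) :
    Set.InjOn φ ↑(Finset.univ.image f) := by
  rintro a ha b hb hab
  simp only [Finset.coe_image, Set.mem_image] at ha hb
  obtain ⟨i, -, rfl⟩ := ha
  obtain ⟨j, -, rfl⟩ := hb
  exact congrArg f (h hab)

lemma map_val_of_injOn {n m : ℕ} {φ : Fin n → Fin m} {e : Finset (Fin n)}
    {u : Finset (Fin m)} (hinj : Set.InjOn φ ↑e) (himg : e.image φ = u) :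
    e.val.map φ = u.val := by
  classical
  have hnd : (e.val.map φ).Nodup :=
    Multiset.Nodup.map_on (fun a ha b hb => hinj ha hb) e.nodup
  have : (e.image φ).val = (e.val.map φ).dedup := rfl
  rw [← himg, this, Multiset.dedup_eq_self.mpr hnd]

lemma image_of_map_val {n m : ℕ} {φ : Fin n → Fin m} {e : Finset (Fin n)}
    {u : Finset (Fin m)} (h : e.val.map φ = u.val) :
    e.image φ = u ∧ Set.InjOn φ ↑e := by
  classical
  constructor
  · apply Finset.val_injective
    show (e.val.map φ).dedup = u.val
    rw [h, Multiset.dedup_eq_self.mpr u.nodup]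
  · intro a ha b hb hab
    exact Multiset.inj_on_of_nodup_map (h ▸ u.nodup) a ha b hb hab

/-- Lifting a tuple `β` enumerating `u` through the bijection `φ : e → u`. -/
lemma exists_lift {φ : Fin nG → Fin nH} {e : Finset (Fin nG)} {u : Finset (Fin nH)}
    (x : Fin nG) (hx : x ∈ e) (hec : e.card = t + 1)
    (hinj : Set.InjOn φ ↑e) (himg : e.image φ = u) {β : Fin t → Fin nH}
    (hβinj : Function.Injective (Fin.cons (φ x) β : Fin (t+1) → Fin nH))
    (hβimg : Finset.univ.image (Fin.cons (φ x) β : Fin (t+1) → Fin nH) = u) :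
    ∃ g : Fin t → Fin nG, (∀ j, g j ∈ e) ∧ (∀ j, φ (g j) = β j) ∧
      Function.Injective (Fin.cons x g : Fin (t+1) → Fin nG) ∧
      Finset.univ.image (Fin.cons x g : Fin (t+1) → Fin nG) = e := by
  classical
  have hβmem : ∀ j, β j ∈ u := by
    intro j
    rw [← hβimg]
    exact Finset.mem_image.mpr ⟨Fin.succ j, Finset.mem_univ _, by simp⟩
  have hget : ∀ j, ∃ a, a ∈ e ∧ φ a = β j := by
    intro j
    have := hβmem j
    rw [← himg] at this
    simpa [Finset.mem_image] using this
  choose g hge hgβ using hget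
  have hcomp : φ ∘ (Fin.cons x g : Fin (t+1) → Fin nG)
      = (Fin.cons (φ x) β : Fin (t+1) → Fin nH) := by
    have hfg : φ ∘ g = β := funext hgβ
    rw [← consComp, hfg]
  have hci : Function.Injective (Fin.cons x g : Fin (t+1) → Fin nG) := by
    apply Function.Injective.of_comp (f := φ)
    rw [hcomp]; exact hβinj
  refine ⟨g, hge, hgβ, hci, ?_⟩
  have hsub : Finset.univ.image (Fin.cons x g : Fin (t+1) → Fin nG) ⊆ e := by
    intro a ha
    obtain ⟨i, -, rfl⟩ := Finset.mem_image.mp ha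
    refine Fin.cases ?_ ?_ i
    · exact hx
    · intro j; exact hge j
  refine Finset.eq_of_subset_of_card_le hsub ?_
  rw [cardImageCons _ _ hci, hec]

lemma injective_comp_of_injOn {φ : Fin nG → Fin nH} {f : Fin (t+1) → Fin nG}
    (hf : Function.Injective f) (h : Set.InjOn φ ↑(Finset.univ.image f)) :
    Function.Injective (φ ∘ f) := by
  intro a b hab
  apply hf
  exact h (Finset.mem_coe.mpr (Finset.mem_image_of_mem f (Finset.mem_univ a)))
    (Finset.mem_coe.mpr (Finset.mem_image_of_mem f (Finset.mem_univ b))) hab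

lemma covering_to_count {edgesG : Finset (Finset (Fin nG))}
    {edgesH : Finset (Finset (Fin nH))} {φ : Fin nG → Fin nH}
    (huG : ∀ e ∈ edgesG, e.card = t + 1) (huH : ∀ u ∈ edgesH, u.card = t + 1)
    (hcov : IsCoveringSet edgesG edgesH φ) (x : Fin nG) (β : Fin t → Fin nH) :
    ((Finset.univ.filter fun g : Fin t → Fin nG =>
        Function.Injective (Fin.cons x g : Fin (t+1) → Fin nG)
        ∧ Finset.univ.image (Fin.cons x g) ∈ edgesG
        ∧ ∀ j, φ (g j) = β j).card
      = if Function.Injective (Fin.cons (φ x) β : Fin (t+1) → Fin nH)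
            ∧ Finset.univ.image (Fin.cons (φ x) β) ∈ edgesH
        then 1 else 0) := by
  classical
  obtain ⟨-, hmap, hbij⟩ := hcov
  split_ifs with hcond
  · obtain ⟨hβi, hβm⟩ := hcond
    set u := Finset.univ.image (Fin.cons (φ x) β : Fin (t+1) → Fin nH) with hu
    have hxu : φ x ∈ u := Finset.mem_image.mpr ⟨0, Finset.mem_univ _, by simp⟩
    obtain ⟨e, he, heu⟩ := (hbij x).surjOn (Set.mem_setOf.mpr ⟨hβm, hxu⟩)
    obtain ⟨heG, hxe⟩ := he
    have heuc : e.image φ = u := heu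
    have hecard : e.card = t + 1 := huG e heG
    have hinj : Set.InjOn φ ↑e := by
      apply Finset.injOn_of_card_image_eq
      rw [heuc, hu, cardImageCons _ _ hβi, hecard]
    obtain ⟨g, hge, hgβ, hgi, hgimg⟩ := exists_lift x hxe hecard hinj heuc hβi rfl
    rw [Finset.card_eq_one]
    refine ⟨g, Finset.eq_singleton_iff_unique_mem.mpr ⟨?_, ?_⟩⟩
    · simp only [Finset.mem_filter, Finset.mem_univ, true_and]
      exact ⟨hgi, hgimg ▸ heG, hgβ⟩
    · intro g' hg'
      simp only [Finset.mem_filter, Finset.mem_univ, true_and] at hg'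
      obtain ⟨hg'i, hg'G, hg'β⟩ := hg'
      set e' := Finset.univ.image (Fin.cons x g' : Fin (t+1) → Fin nG) with he'
      have hxe' : x ∈ e' := Finset.mem_image.mpr ⟨0, Finset.mem_univ _, by simp⟩
      have hfg' : φ ∘ g' = β := funext hg'β
      have he'u : e'.image φ = u := by
        rw [he', Finset.image_image, ← consComp, hfg', hu]
      have : e' = e := (hbij x).injOn (Set.mem_setOf.mpr ⟨hg'G, hxe'⟩)
        (Set.mem_setOf.mpr ⟨heG, hxe⟩) (by simpa using he'u.trans heuc.symm)
      funext j
      have hj' : g' j ∈ e := by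
        rw [← this]
        exact Finset.mem_image.mpr ⟨Fin.succ j, Finset.mem_univ _, by simp⟩
      exact hinj hj' (hge j) ((hg'β j).trans (hgβ j).symm)
  · rw [Finset.card_eq_zero, Finset.filter_eq_empty_iff]
    rintro g - ⟨hgi, hgG, hgβ⟩
    set e := Finset.univ.image (Fin.cons x g : Fin (t+1) → Fin nG) with he
    have heH : e.image φ ∈ edgesH := hmap e hgG
    have hinj : Set.InjOn φ ↑e := by
      apply Finset.injOn_of_card_image_eq
      rw [huH _ heH, he, cardImageCons _ _ hgi]
    have hfg : φ ∘ g = β := funext hgβ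
    have hci : Function.Injective (φ ∘ (Fin.cons x g : Fin (t+1) → Fin nG)) :=
      injective_comp_of_injOn hgi hinj
    rw [← consComp, hfg] at hci
    apply hcond
    refine ⟨hci, ?_⟩
    have : Finset.univ.image (Fin.cons (φ x) β : Fin (t+1) → Fin nH)
        = e.image φ := by
      rw [he, Finset.image_image, ← consComp, hfg]
    rw [this]
    exact heH

lemma count_to_covering {edgesG : Finset (Finset (Fin nG))}
    {edgesH : Finset (Finset (Fin nH))} {φ : Fin nG → Fin nH}
    (huG : ∀ e ∈ edgesG, e.card = t + 1) (huH : ∀ u ∈ edgesH, u.card = t + 1)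
    (hsurj : Function.Surjective φ)
    (hcount : ∀ (x : Fin nG) (β : Fin t → Fin nH),
      ((Finset.univ.filter fun g : Fin t → Fin nG =>
          Function.Injective (Fin.cons x g : Fin (t+1) → Fin nG)
          ∧ Finset.univ.image (Fin.cons x g) ∈ edgesG
          ∧ ∀ j, φ (g j) = β j).card
        = if Function.Injective (Fin.cons (φ x) β : Fin (t+1) → Fin nH)
              ∧ Finset.univ.image (Fin.cons (φ x) β) ∈ edgesH
          then 1 else 0)) :
    IsCoveringSet edgesG edgesH φ := by
  classical
  -- Step A
  have stepA : ∀ e ∈ edgesG, Set.InjOn φ ↑e ∧ e.image φ ∈ edgesH := by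
    intro e heG
    have hecard : e.card = t + 1 := huG e heG
    obtain ⟨x, hxe⟩ := Finset.card_pos.mp (show 0 < e.card by rw [hecard]; omega)
    obtain ⟨g, hgi, hgimg⟩ := exists_enum (e.erase x)
      (show (e.erase x).card = t by rw [Finset.card_erase_of_mem hxe, hecard]; omega)
    have hxr : x ∉ Set.range g := by
      rintro ⟨j, hj⟩
      have : g j ∈ e.erase x := by
        rw [← hgimg]; exact Finset.mem_image_of_mem g (Finset.mem_univ j)
      rw [hj] at this
      exact (Finset.mem_erase.mp this).1 rfl
    have hci : Function.Injective (Fin.cons x g : Fin (t+1) → Fin nG) :=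
      Fin.cons_injective_iff.mpr ⟨hxr, hgi⟩
    have himg : Finset.univ.image (Fin.cons x g : Fin (t+1) → Fin nG) = e := by
      rw [imageCons, hgimg, Finset.insert_erase hxe]
    have hmem : g ∈ (Finset.univ.filter fun g' : Fin t → Fin nG =>
        Function.Injective (Fin.cons x g' : Fin (t+1) → Fin nG)
        ∧ Finset.univ.image (Fin.cons x g') ∈ edgesG
        ∧ ∀ j, φ (g' j) = (φ ∘ g) j) := by
      simp only [Finset.mem_filter, Finset.mem_univ, true_and]
      exact ⟨hci, himg ▸ heG, fun j => rfl⟩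
    have hpos : 0 < (Finset.univ.filter fun g' : Fin t → Fin nG =>
        Function.Injective (Fin.cons x g' : Fin (t+1) → Fin nG)
        ∧ Finset.univ.image (Fin.cons x g') ∈ edgesG
        ∧ ∀ j, φ (g' j) = (φ ∘ g) j).card := Finset.card_pos.mpr ⟨g, hmem⟩
    rw [hcount x (φ ∘ g)] at hpos
    have hcond : Function.Injective (Fin.cons (φ x) (φ ∘ g) : Fin (t+1) → Fin nH)
        ∧ Finset.univ.image (Fin.cons (φ x) (φ ∘ g)) ∈ edgesH := by
      by_contra hc
      rw [if_neg hc] at hpos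
      exact absurd hpos (lt_irrefl 0)
    obtain ⟨hi, hm⟩ := hcond
    rw [consComp] at hi
    have himgH : Finset.univ.image ((φ ∘ Fin.cons x g) : Fin (t+1) → Fin nH)
        = e.image φ := by
      rw [← Finset.image_image, himg]
    constructor
    · intro a ha b hb hab
      rw [← himg] at ha hb
      exact injOn_image_of_comp hi ha hb hab
    · rw [consComp, himgH] at hm
      exact hm
  refine ⟨hsurj, fun e he => (stepA e he).2, fun x => ⟨?_, ?_, ?_⟩⟩
  · rintro e ⟨heG, hxe⟩
    exact ⟨(stepA e heG).2, Finset.mem_image_of_mem φ hxe⟩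
  · -- InjOn
    rintro e₁ ⟨h1G, hx1⟩ e₂ ⟨h2G, hx2⟩ heq
    by_contra hne
    set u := e₁.image φ with hu
    have huH' : u ∈ edgesH := (stepA e₁ h1G).2
    have hxu : φ x ∈ u := Finset.mem_image_of_mem φ hx1
    obtain ⟨β, hβi, hβimg⟩ := exists_enum (u.erase (φ x))
      (show (u.erase (φ x)).card = t by rw [Finset.card_erase_of_mem hxu, huH u huH']; omega)
    have hβr : φ x ∉ Set.range β := by
      rintro ⟨j, hj⟩
      have : β j ∈ u.erase (φ x) := by
        rw [← hβimg]; exact Finset.mem_image_of_mem β (Finset.mem_univ j)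
      rw [hj] at this
      exact (Finset.mem_erase.mp this).1 rfl
    have hci : Function.Injective (Fin.cons (φ x) β : Fin (t+1) → Fin nH) :=
      Fin.cons_injective_iff.mpr ⟨hβr, hβi⟩
    have hcimg : Finset.univ.image (Fin.cons (φ x) β : Fin (t+1) → Fin nH) = u := by
      rw [imageCons, hβimg, Finset.insert_erase hxu]
    obtain ⟨g₁, hg1e, hg1β, hg1i, hg1img⟩ :=
      exists_lift x hx1 (huG e₁ h1G) (stepA e₁ h1G).1 rfl hci (hcimg.trans hu)
    obtain ⟨g₂, hg2e, hg2β, hg2i, hg2img⟩ :=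
      exists_lift x hx2 (huG e₂ h2G) (stepA e₂ h2G).1 rfl hci
        (hcimg.trans (hu.trans (by simpa using heq)))
    have hgne : g₁ ≠ g₂ := by
      intro h
      apply hne
      rw [← hg1img, ← hg2img, h]
    have h2le : 1 < (Finset.univ.filter fun g : Fin t → Fin nG =>
        Function.Injective (Fin.cons x g : Fin (t+1) → Fin nG)
        ∧ Finset.univ.image (Fin.cons x g) ∈ edgesG
        ∧ ∀ j, φ (g j) = β j).card := by
      apply Finset.one_lt_card.mpr
      refine ⟨g₁, ?_, g₂, ?_, hgne⟩
      · simp only [Finset.mem_filter, Finset.mem_univ, true_and]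
        exact ⟨hg1i, hg1img ▸ h1G, hg1β⟩
      · simp only [Finset.mem_filter, Finset.mem_univ, true_and]
        exact ⟨hg2i, hg2img ▸ h2G, hg2β⟩
    rw [hcount x β, hcimg] at h2le
    rw [if_pos ⟨hci, huH'⟩] at h2le
    exact absurd h2le (lt_irrefl 1)
  · -- SurjOn
    rintro u ⟨huH', hxu⟩
    obtain ⟨β, hβi, hβimg⟩ := exists_enum (u.erase (φ x))
      (show (u.erase (φ x)).card = t by rw [Finset.card_erase_of_mem hxu, huH u huH']; omega)
    have hβr : φ x ∉ Set.range β := by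
      rintro ⟨j, hj⟩
      have : β j ∈ u.erase (φ x) := by
        rw [← hβimg]; exact Finset.mem_image_of_mem β (Finset.mem_univ j)
      rw [hj] at this
      exact (Finset.mem_erase.mp this).1 rfl
    have hci : Function.Injective (Fin.cons (φ x) β : Fin (t+1) → Fin nH) :=
      Fin.cons_injective_iff.mpr ⟨hβr, hβi⟩
    have hcimg : Finset.univ.image (Fin.cons (φ x) β : Fin (t+1) → Fin nH) = u := by
      rw [imageCons, hβimg, Finset.insert_erase hxu]
    have h1 : (Finset.univ.filter fun g : Fin t → Fin nG =>
        Function.Injective (Fin.cons x g : Fin (t+1) → Fin nG)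
        ∧ Finset.univ.image (Fin.cons x g) ∈ edgesG
        ∧ ∀ j, φ (g j) = β j).card = 1 := by
      rw [hcount x β, hcimg, if_pos ⟨hci, huH'⟩]
    have hpos : 0 < (Finset.univ.filter fun g : Fin t → Fin nG =>
        Function.Injective (Fin.cons x g : Fin (t+1) → Fin nG)
        ∧ Finset.univ.image (Fin.cons x g) ∈ edgesG
        ∧ ∀ j, φ (g j) = β j).card := lt_of_lt_of_eq Nat.zero_lt_one h1.symm
    obtain ⟨g, hg⟩ := Finset.card_pos.mp hpos
    simp only [Finset.mem_filter, Finset.mem_univ, true_and] at hg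
    obtain ⟨hgi, hgG, hgβ⟩ := hg
    set e := Finset.univ.image (Fin.cons x g : Fin (t+1) → Fin nG) with he
    have hxe : x ∈ e := Finset.mem_image.mpr ⟨0, Finset.mem_univ _, by simp⟩
    refine ⟨e, ⟨hgG, hxe⟩, ?_⟩
    show e.image φ = u
    have hfg : φ ∘ g = β := funext hgβ
    rw [he, Finset.image_image, ← consComp, hfg, hcimg]

lemma injOn_of_cov {edgesG : Finset (Finset (Fin nG))}
    {edgesH : Finset (Finset (Fin nH))} {φ : Fin nG → Fin nH}
    (huG : ∀ e ∈ edgesG, e.card = t + 1) (huH : ∀ u ∈ edgesH, u.card = t + 1)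
    (hcov : IsCoveringSet edgesG edgesH φ) :
    ∀ e ∈ edgesG, Set.InjOn φ ↑e := by
  intro e heG
  apply Finset.injOn_of_card_image_eq
  rw [huH _ (hcov.2.1 e heG), huG e heG]

lemma partC {φ : Fin nG → Fin nH} {e : Finset (Fin nG)} {u : Finset (Fin nH)}
    (h : e.val.map φ = u.val) (y : Fin nH) :
    (e.filter fun x => φ x = y).card = if y ∈ u then 1 else 0 := by
  classical
  have h1 : (e.filter fun x => φ x = y).card
      = Multiset.count y (e.val.map φ) := by
    rw [Multiset.count_map]
    rw [Finset.card_def, Finset.filter_val]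
    congr 1
    apply Multiset.filter_congr
    intro a _
    exact ⟨Eq.symm, Eq.symm⟩
  rw [h1, h]
  by_cases hy : y ∈ u
  · rw [if_pos hy]
    exact Multiset.count_eq_one_of_mem u.nodup hy
  · rw [if_neg hy, Multiset.count_eq_zero]
    exact hy

lemma partB {edgesG : Finset (Finset (Fin nG))}
    {edgesH : Finset (Finset (Fin nH))} {φ : Fin nG → Fin nH}
    (huG : ∀ e ∈ edgesG, e.card = t + 1) (huH : ∀ u ∈ edgesH, u.card = t + 1)
    (hcov : IsCoveringSet edgesG edgesH φ) (x : Fin nG) (u : Finset (Fin nH))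
    (hu : u ∈ edgesH) :
    (edgesG.filter fun e => x ∈ e ∧ e.val.map φ = u.val).card
      = if φ x ∈ u then 1 else 0 := by
  classical
  have hbij := hcov.2.2 x
  by_cases hxu : φ x ∈ u
  · rw [if_pos hxu]
    obtain ⟨e, ⟨heG, hxe⟩, heq⟩ := hbij.surjOn (Set.mem_setOf.mpr ⟨hu, hxu⟩)
    rw [Finset.card_eq_one]
    refine ⟨e, Finset.eq_singleton_iff_unique_mem.mpr ⟨?_, ?_⟩⟩
    · rw [Finset.mem_filter]
      exact ⟨heG, hxe, map_val_of_injOn (injOn_of_cov huG huH hcov e heG) heq⟩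
    · intro e' he'
      rw [Finset.mem_filter] at he'
      obtain ⟨he'G, hxe', hmap'⟩ := he'
      have := (image_of_map_val hmap').1
      exact hbij.injOn (Set.mem_setOf.mpr ⟨he'G, hxe'⟩)
        (Set.mem_setOf.mpr ⟨heG, hxe⟩) (by simpa using this.trans heq.symm)
  · rw [if_neg hxu, Finset.card_eq_zero, Finset.filter_eq_empty_iff]
    rintro e heG ⟨hxe, hmap⟩
    apply hxu
    rw [← (image_of_map_val hmap).1]
    exact Finset.mem_image_of_mem φ hxe

lemma partA {edgesG : Finset (Finset (Fin nG))}
    {edgesH : Finset (Finset (Fin nH))} {φ : Fin nG → Fin nH}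
    (huG : ∀ e ∈ edgesG, e.card = t + 1) (huH : ∀ u ∈ edgesH, u.card = t + 1)
    (hcov : IsCoveringSet edgesG edgesH φ) :
    IsPerfect edgesG φ := by
  classical
  have key : ∀ x : Fin nG, incidentRanges edgesG φ x
      = (edgesH.filter fun u => φ x ∈ u).val.map Finset.val := by
    intro x
    have hbij := hcov.2.2 x
    have himg : (edgesG.filter fun e => x ∈ e).image (fun e => e.image φ)
        = edgesH.filter fun u => φ x ∈ u := by
      ext u
      simp only [Finset.mem_image, Finset.mem_filter]
      constructor
      · rintro ⟨e, ⟨heG, hxe⟩, rfl⟩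
        have := hbij.mapsTo (Set.mem_setOf.mpr ⟨heG, hxe⟩)
        exact ⟨this.1, this.2⟩
      · rintro ⟨hu, hxu⟩
        obtain ⟨e, ⟨heG, hxe⟩, heq⟩ := hbij.surjOn (Set.mem_setOf.mpr ⟨hu, hxu⟩)
        exact ⟨e, ⟨heG, hxe⟩, heq⟩
    have hnodup : ((edgesG.filter fun e => x ∈ e).val.map
        (fun e => e.image φ)).Nodup := by
      apply Multiset.Nodup.map_on _ (edgesG.filter fun e => x ∈ e).nodup
      intro e₁ h1 e₂ h2 h
      rw [← Finset.mem_def, Finset.mem_filter] at h1 h2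
      exact hbij.injOn (Set.mem_setOf.mpr h1) (Set.mem_setOf.mpr h2) h
    have hmap : (edgesG.filter fun e => x ∈ e).val.map (fun e => e.image φ)
        = (edgesH.filter fun u => φ x ∈ u).val := by
      rw [← himg, Finset.image_val, Multiset.dedup_eq_self.mpr hnodup]
    have h1 : incidentRanges edgesG φ x
        = (edgesG.filter fun e => x ∈ e).val.map
            (fun e => ((e.image φ) : Finset (Fin nH)).val) := by
      rw [incidentRanges]
      apply Multiset.map_congr rfl
      intro e he
      rw [← Finset.mem_def, Finset.mem_filter] at he
      exact map_val_of_injOn (injOn_of_cov huG huH hcov e he.1) rfl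
    rw [h1]
    rw [show (fun e : Finset (Fin nG) => ((e.image φ) : Finset (Fin nH)).val)
        = Finset.val ∘ (fun e => e.image φ) from rfl]
    rw [← Multiset.map_map, hmap]
  intro x y hxy
  rw [key x, key y, hxy]

end Aux

/-- A map `φ : X(G) → X(H)` between `(t+1)`-uniform hypergraphs is a covering of `H`
by `G` iff `φ`, viewed as a coloring of the vertices of `G` by the vertices of `H`, is
a perfect coloring of `G` whose `(t+1)`-dimensional parameter matrix equals the
adjacency matrix `A_H` of `H`; moreover, in that case the incidence parameters of this
coloring are `(C, Cᵀ)` for the incidence matrix `C` of `H`. -/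
theorem stmt13 {nG nH t : ℕ}
    (edgesG : Finset (Finset (Fin nG))) (huG : ∀ e ∈ edgesG, e.card = t + 1)
    (edgesH : Finset (Finset (Fin nH))) (huH : ∀ u ∈ edgesH, u.card = t + 1)
    (φ : Fin nG → Fin nH) :
    (IsCoveringSet edgesG edgesH φ ↔
      (Function.Surjective φ ∧
        mdMulMat (adjMatrix t edgesG) (colorMatrix φ)
          = matMulMd (colorMatrix φ) (adjMatrix t edgesH))) ∧
    (IsCoveringSet edgesG edgesH φ →
      IsPerfect edgesG φ ∧
      (∀ (x : Fin nG) (u : Finset (Fin nH)), u ∈ edgesH →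
        ((edgesG.filter fun e => x ∈ e ∧ e.val.map φ = u.val).card
          = if φ x ∈ u then 1 else 0)) ∧
      (∀ u ∈ edgesH, ∀ e ∈ edgesG, e.val.map φ = u.val →
        ∀ y : Fin nH,
          (e.filter fun x => φ x = y).card = if y ∈ u then 1 else 0)) := by
  constructor
  · constructor
    · intro hcov
      refine ⟨hcov.1, ?_⟩
      funext x β
      exact (entry_iff edgesG edgesH φ x β).mpr (covering_to_count huG huH hcov x β)
    · rintro ⟨hsurj, heq⟩
      exact count_to_covering huG huH hsurj fun x β =>
        (entry_iff edgesG edgesH φ x β).mp (congrFun (congrFun heq x) β)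
  · intro hcov
    exact ⟨partA huG huH hcov, fun x u hu => partB huG huH hcov x u hu,
      fun u _ e _ hmap y => partC hmap y⟩
end

section
/- Assume a d-uniform hypergraph G with d-dimensional adjacency matrix A_G covers a hypergraph H with d-dimensional adjacency matrix A_H. Then every eigenvalue of A_H is an eigenvalue of A_G; more precisely, if x is an eigenvector of A_H for λ and P is the color matrix of the covering, then Px is an eigenvector of A_G for λ. -/
open Finset

/-- Assume a `(t+1)`-uniform hypergraph `G` with adjacency matrix `A_G` covers a
`(t+1)`-uniform hypergraph `H` with adjacency matrix `A_H`, i.e. the color matrix `P`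
of the covering `φ` satisfies `A_G ∘ P = P ∘ A_H`.  Then every eigenvalue of `A_H` is
an eigenvalue of `A_G`: if `x` is an eigenvector of `A_H` for `λ`, then `Px` is an
eigenvector of `A_G` for `λ`. -/
theorem stmt16 {nG nH t : ℕ}
    (edgesG : Finset (Finset (Fin nG))) (huG : ∀ e ∈ edgesG, e.card = t + 1)
    (edgesH : Finset (Finset (Fin nH))) (huH : ∀ u ∈ edgesH, u.card = t + 1)
    (φ : Fin nG → Fin nH) (hφ : Function.Surjective φ)
    (hcov : mdMulMat (adjMatrix t edgesG) (colorMatrix φ)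
        = matMulMd (colorMatrix φ) (adjMatrix t edgesH))
    (lam : ℝ) (x : Fin nH → ℝ)
    (hx : ∀ y, mdMulVec (adjMatrix t edgesH) x y = lam * x y ^ t) :
    ∀ i, mdMulVec (adjMatrix t edgesG) ((colorMatrix φ).mulVec x) i
      = lam * ((colorMatrix φ).mulVec x i) ^ t := by
  intro i
  have hP : ∀ j, (colorMatrix φ).mulVec x j = x (φ j) := by
    intro j
    simp [Matrix.mulVec, dotProduct, colorMatrix]
  have key : mdMulVec (adjMatrix t edgesG) ((colorMatrix φ).mulVec x) i
      = ∑ β : Fin t → Fin nH,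
          mdMulMat (adjMatrix t edgesG) (colorMatrix φ) i β * ∏ j, x (β j) := by
    simp only [mdMulVec, mdMulMat, Finset.sum_mul]
    rw [Finset.sum_comm]
    refine Finset.sum_congr rfl fun g _ => ?_
    simp only [mul_assoc, ← Finset.mul_sum]
    congr 1
    have : ∀ β : Fin t → Fin nH,
        (∏ j, colorMatrix φ (g j) (β j)) * ∏ j, x (β j)
        = ∏ j, colorMatrix φ (g j) (β j) * x (β j) := by
      intro β; rw [Finset.prod_mul_distrib]
    simp only [this]
    have h2 : ∀ j : Fin t, (colorMatrix φ).mulVec x (g j)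
        = ∑ c, colorMatrix φ (g j) c * x c := by
      intro j; simp [Matrix.mulVec, dotProduct]
    simp only [h2]
    rw [Finset.prod_univ_sum, ← Fintype.piFinset_univ]
  rw [key, hcov, hP]
  simp only [matMulMd, Finset.sum_mul]
  rw [Finset.sum_comm]
  simp only [mul_assoc, ← Finset.mul_sum]
  have : ∀ c, (∑ β : Fin t → Fin nH, adjMatrix t edgesH c β * ∏ j, x (β j))
      = lam * x c ^ t := fun c => hx c
  simp only [this, colorMatrix, Matrix.of_apply, ite_mul, one_mul, zero_mul]
  simp
end
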